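/- arXiv:2604.00587 — 6 statements merged into one kernel-verified Lean document; each statement's English description precedes it below -/
import Mathlib

section
/- For any n ≥ 1 and any integers ℓ_1, …, ℓ_n with ℓ_i ≥ m for all i, the length of the cylinder interval I_n(ℓ_1,…,ℓ_n) satisfies θ/((1+θ²)·Q_n²) ≤ |I_n(ℓ_1,…,ℓ_n)| ≤ θ/Q_n², where Q_n = Q_n(ℓ_1,…,ℓ_n). -/
open Filter Real

noncomputable section

/-- The generalized Gauss map `T_θ`. -/
def gaussMap (θ : ℝ) (x : ℝ) : ℝ := if x = 0 then 0 else 1 / x - θ * ⌊1 / (θ * x)⌋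

/-- The `n`-th digit (1-indexed) of the θ-expansion of `x`: `ℓ_n(x) = ⌊1/(θ·T_θ^{n−1}(x))⌋`. -/
def digit (θ : ℝ) (x : ℝ) (n : ℕ) : ℤ := ⌊1 / (θ * (gaussMap θ)^[n - 1] x)⌋

/-- `S_{n,θ}(x)`, the sum of the first `n` digits. -/
def Sdig (θ : ℝ) (x : ℝ) (n : ℕ) : ℤ := ∑ k ∈ Finset.Icc 1 n, digit θ x k

/-- `L_{n,θ}(x)`, the maximum of the first `n` digits. -/
def Ldig (θ : ℝ) (x : ℝ) (n : ℕ) : ℤ :=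
  if h : 1 ≤ n then (Finset.Icc 1 n).sup' (Finset.nonempty_Icc.mpr h) (digit θ x) else 0

/-- The ratio `L_{n,θ}(x)·log n·log log n / (S_{n,θ}(x) − L_{n,θ}(x))`. -/
def ratioFun (θ : ℝ) (x : ℝ) (n : ℕ) : ℝ :=
  ((Ldig θ x n : ℝ) * Real.log n * Real.log (Real.log n)) /
    ((Sdig θ x n : ℝ) - (Ldig θ x n : ℝ))

/-- The level set `E_θ(α)` of irrationals in `[0,θ]` where the ratio tends to `α`. -/
def Eset (θ α : ℝ) : Set ℝ :=
  {x | x ∈ Set.Icc 0 θ ∧ Irrational x ∧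
    Tendsto (fun n => ratioFun θ x n) atTop (nhds α)}

/-- The denominators `Q_k` of the θ-expansion convergents:
`Q_0 = 1`, `Q_1 = ℓ_1·θ` (from `Q_{-1} = 0`), `Q_k = ℓ_k·θ·Q_{k-1} + Q_{k-2}`. -/
def Qden (θ : ℝ) (ℓ : ℕ → ℤ) : ℕ → ℝ
  | 0 => 1
  | 1 => (ℓ 1 : ℝ) * θ
  | (n + 2) => (ℓ (n + 2) : ℝ) * θ * Qden θ ℓ (n + 1) + Qden θ ℓ n

/-- The cylinder `I_n(ℓ_1,…,ℓ_n)`: irrationals in `[0,θ]` whose first `n` digits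
are `ℓ_1, …, ℓ_n`. -/
def cylinder (θ : ℝ) (n : ℕ) (ℓ : ℕ → ℤ) : Set ℝ :=
  {x | x ∈ Set.Icc 0 θ ∧ Irrational x ∧ ∀ i : ℕ, 1 ≤ i → i ≤ n → digit θ x i = ℓ i}

/-!
Unwinding the last digit, a point of `I_n(ℓ_1,…,ℓ_n)` is `x = φ(t)` with `t = T_θ^n x ∈ [0, θ]`,
where `φ(t) = 1/(ℓ_1θ + 1/(ℓ_2θ + ⋯ + 1/(ℓ_nθ + t)))`, and conversely `φ(t)` lies in the cylinder
for every `t ∈ (0, θ)` with `φ(t)` irrational. As a Möbius map with denominator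
`Q_n + t Q_{n-1}` and determinant `±1`, `φ` satisfies
`|φ(t) - φ(s)| = |t - s| / ((Q_n + t Q_{n-1}) (Q_n + s Q_{n-1}))`.
This gives the upper bound `θ / Q_n²`. Since `φ` is injective on `(0, θ)` (inverted by `T_θ^n`),
it takes irrational values on a dense set, so `φ(0)` and `φ(θ)` lie in the closure of the
cylinder; their distance is `θ / (Q_n (Q_n + θ Q_{n-1}))`, and `Q_{n-1} ≤ θ Q_n` because
`ℓ_n θ² ≥ 1`.
-/

open Set

namespace ThetaExpansion

variable {θ : ℝ} {ℓ : ℕ → ℤ} {n : ℕ} {a : ℤ}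

/-- The inverse branch of `gaussMap θ` with digit `a`. -/
def invBranch (θ : ℝ) (a : ℤ) (t : ℝ) : ℝ := 1 / (a * θ + t)

/-- `contFrac θ ℓ n t = 1 / (ℓ₁θ + 1 / (ℓ₂θ + ⋯ + 1 / (ℓₙθ + t)))`. -/
def contFrac (θ : ℝ) (ℓ : ℕ → ℤ) : ℕ → ℝ → ℝ
  | 0, t => t
  | n + 1, t => contFrac θ ℓ n (invBranch θ (ℓ (n + 1)) t)

/-- `Q_{n-1}`, with `Q_{-1} = 0`. -/
def prevQden (θ : ℝ) (ℓ : ℕ → ℤ) : ℕ → ℝ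
  | 0 => 0
  | n + 1 => Qden θ ℓ n

/-- For `θ² = 1/m` this is the paper's condition `ℓ_i ≥ m` on the digits. -/
def Admissible (θ : ℝ) (n : ℕ) (ℓ : ℕ → ℤ) : Prop :=
  ∀ i, 1 ≤ i → i ≤ n → 1 ≤ (ℓ i : ℝ) * θ ^ 2

theorem Admissible.of_succ (h : Admissible θ (n + 1) ℓ) : Admissible θ n ℓ :=
  fun i hi hin => h i hi (hin.trans n.le_succ)

theorem Admissible.last (h : Admissible θ (n + 1) ℓ) : 1 ≤ (ℓ (n + 1) : ℝ) * θ ^ 2 :=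
  h (n + 1) (Nat.le_add_left 1 n) le_rfl

theorem Admissible.digit_mul_pos (hθ : 0 < θ) (h : Admissible θ n ℓ) {i : ℕ} (hi : 1 ≤ i)
    (hin : i ≤ n) : 0 < (ℓ i : ℝ) * θ := by
  nlinarith [h i hi hin]

theorem Qden_succ (n : ℕ) :
    Qden θ ℓ (n + 1) = ℓ (n + 1) * θ * Qden θ ℓ n + prevQden θ ℓ n := by
  cases n <;> simp [Qden, prevQden]

theorem Qden_pos (hθ : 0 < θ) : ∀ {n}, Admissible θ n ℓ → 0 < Qden θ ℓ n
  | 0, _ => one_pos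
  | 1, h => h.digit_mul_pos hθ le_rfl le_rfl
  | n + 2, h => add_pos (mul_pos (h.digit_mul_pos hθ (by omega) le_rfl) (Qden_pos hθ h.of_succ))
      (Qden_pos hθ h.of_succ.of_succ)

theorem prevQden_nonneg (hθ : 0 < θ) (h : Admissible θ n ℓ) : 0 ≤ prevQden θ ℓ n := by
  cases n with
  | zero => exact le_rfl
  | succ n => exact (Qden_pos hθ h.of_succ).le

theorem prevQden_le (hθ : 0 < θ) (h : Admissible θ n ℓ) : prevQden θ ℓ n ≤ θ * Qden θ ℓ n := by
  cases n with
  | zero => simpa [prevQden, Qden] using hθ.le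
  | succ n =>
    have hQ := Qden_pos hθ h.of_succ
    have hQ' := prevQden_nonneg hθ h.of_succ
    rw [Qden_succ]
    change Qden θ ℓ n ≤ _
    nlinarith [h.last, mul_nonneg hθ.le hQ']

theorem invBranch_nonneg (ha : 0 < (a : ℝ) * θ) {t : ℝ} (ht : 0 ≤ t) : 0 ≤ invBranch θ a t :=
  div_nonneg zero_le_one (by linarith)

theorem contFrac_sub (hθ : 0 < θ) (h : Admissible θ n ℓ) {t s : ℝ} (ht : 0 ≤ t) (hs : 0 ≤ s) :
    contFrac θ ℓ n t - contFrac θ ℓ n s = (-1) ^ n * (t - s) /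
      ((Qden θ ℓ n + t * prevQden θ ℓ n) * (Qden θ ℓ n + s * prevQden θ ℓ n)) := by
  induction n generalizing t s with
  | zero => simp [contFrac, Qden, prevQden]
  | succ n ih =>
    have ha := h.digit_mul_pos hθ (Nat.le_add_left 1 n) le_rfl
    rw [contFrac, contFrac, ih h.of_succ (invBranch_nonneg ha ht) (invBranch_nonneg ha hs),
      Qden_succ]
    change _ = _ / ((_ + t * Qden θ ℓ n) * (_ + s * Qden θ ℓ n))
    unfold invBranch
    -- `(Q_n + u Q_{n-1}) (ℓ_{n+1} θ + t) = Q_{n+1} + t Q_n` for `u = 1 / (ℓ_{n+1} θ + t)`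
    field_simp
    ring

theorem dist_contFrac (hθ : 0 < θ) (h : Admissible θ n ℓ) {t s : ℝ} (ht : 0 ≤ t) (hs : 0 ≤ s) :
    dist (contFrac θ ℓ n t) (contFrac θ ℓ n s) = dist t s /
      ((Qden θ ℓ n + t * prevQden θ ℓ n) * (Qden θ ℓ n + s * prevQden θ ℓ n)) := by
  have hQ := Qden_pos hθ h
  have hQ' := prevQden_nonneg hθ h
  have hD : 0 < (Qden θ ℓ n + t * prevQden θ ℓ n) * (Qden θ ℓ n + s * prevQden θ ℓ n) := by
    positivity
  rw [Real.dist_eq, contFrac_sub hθ h ht hs, abs_div, abs_mul, abs_pow, abs_neg, abs_one,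
    one_pow, one_mul, abs_of_pos hD, Real.dist_eq]

theorem dist_contFrac_le (hθ : 0 < θ) (h : Admissible θ n ℓ) {t s : ℝ} (ht : 0 ≤ t)
    (hs : 0 ≤ s) : dist (contFrac θ ℓ n t) (contFrac θ ℓ n s) ≤ dist t s / Qden θ ℓ n ^ 2 := by
  have hQ := Qden_pos hθ h
  have hQ' := prevQden_nonneg hθ h
  rw [dist_contFrac hθ h ht hs, sq]
  gcongr <;> nlinarith [mul_nonneg ht hQ', mul_nonneg hs hQ']

theorem continuousOn_contFrac (hθ : 0 < θ) (h : Admissible θ n ℓ) :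
    ContinuousOn (contFrac θ ℓ n) (Ici 0) := by
  refine (LipschitzOnWith.of_dist_le_mul (K := (Qden θ ℓ n ^ 2)⁻¹.toNNReal)
    fun t ht s hs => ?_).continuousOn
  rw [Real.coe_toNNReal _ (by positivity), ← div_eq_inv_mul]
  exact dist_contFrac_le hθ h ht hs

theorem digit_succ (θ x : ℝ) (n : ℕ) :
    digit θ x (n + 1) = ⌊1 / (θ * (gaussMap θ)^[n] x)⌋ := rfl

theorem gaussMap_mem_Ico (hθ : 0 < θ) {x : ℝ} (hx : x ≠ 0) : gaussMap θ x ∈ Ico 0 θ := by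
  have hfract : gaussMap θ x = θ * Int.fract (1 / (θ * x)) := by
    rw [gaussMap, if_neg hx, Int.fract]
    field_simp
  rw [hfract]
  exact ⟨by positivity, mul_lt_of_lt_one_right hθ (Int.fract_lt_one _)⟩

theorem invBranch_gaussMap {x : ℝ} (hx : x ≠ 0) :
    invBranch θ ⌊1 / (θ * x)⌋ (gaussMap θ x) = x := by
  rw [invBranch, gaussMap, if_neg hx, add_sub_left_comm, mul_comm, sub_self, add_zero,
    one_div_one_div]

theorem floor_invBranch (hθ : 0 < θ) {t : ℝ} (ht : t ∈ Ico 0 θ) :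
    ⌊1 / (θ * invBranch θ a t)⌋ = a := by
  have hdigit : 1 / (θ * invBranch θ a t) = a + t / θ := by
    unfold invBranch
    field_simp
  rw [hdigit, Int.floor_intCast_add, Int.floor_eq_zero_iff.mpr, add_zero]
  exact ⟨div_nonneg ht.1 hθ.le, (div_lt_one hθ).mpr ht.2⟩

theorem gaussMap_invBranch (hθ : 0 < θ) (ha : 0 < (a : ℝ) * θ) {t : ℝ} (ht : t ∈ Ico 0 θ) :
    gaussMap θ (invBranch θ a t) = t := by
  have hne : invBranch θ a t ≠ 0 := by unfold invBranch; have := ht.1; positivity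
  rw [gaussMap, if_neg hne, floor_invBranch hθ ht, invBranch, one_div_one_div]
  ring

theorem invBranch_mem_Ioo (hθ : 0 < θ) (ha : 1 ≤ (a : ℝ) * θ ^ 2) {t : ℝ} (ht : t ∈ Ioo 0 θ) :
    invBranch θ a t ∈ Ioo 0 θ := by
  have hpos : 0 < (a : ℝ) * θ + t := by nlinarith [ht.1]
  refine ⟨one_div_pos.mpr hpos, ?_⟩
  rw [invBranch, div_lt_iff₀ hpos]
  nlinarith [mul_pos hθ ht.1]

theorem mapsTo_contFrac (hθ : 0 < θ) (h : Admissible θ n ℓ) :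
    MapsTo (contFrac θ ℓ n) (Ioo 0 θ) (Ioo 0 θ) := by
  induction n with
  | zero => exact mapsTo_id _
  | succ n ih => exact fun t ht => ih h.of_succ (invBranch_mem_Ioo hθ h.last ht)

theorem iterate_gaussMap_contFrac (hθ : 0 < θ) (h : Admissible θ n ℓ) {t : ℝ}
    (ht : t ∈ Ioo 0 θ) : (gaussMap θ)^[n] (contFrac θ ℓ n t) = t ∧
      ∀ i, 1 ≤ i → i ≤ n → digit θ (contFrac θ ℓ n t) i = ℓ i := by
  induction n generalizing t with
  | zero => exact ⟨rfl, fun i hi hin => by omega⟩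
  | succ n ih =>
    have ha := h.digit_mul_pos hθ (Nat.le_add_left 1 n) le_rfl
    obtain ⟨hiter, hdigits⟩ := ih h.of_succ (invBranch_mem_Ioo hθ h.last ht)
    refine ⟨?_, fun i hi hin => ?_⟩
    · rw [contFrac, Function.iterate_succ_apply', hiter,
        gaussMap_invBranch hθ ha (Ioo_subset_Ico_self ht)]
    · rcases Nat.of_le_succ hin with hin | rfl
      · exact hdigits i hi hin
      · rw [contFrac, digit_succ, hiter, floor_invBranch hθ (Ioo_subset_Ico_self ht)]

theorem eq_contFrac_iterate_gaussMap (hθ : 0 < θ) (hℓ : ∀ i, 1 ≤ i → i ≤ n → ℓ i ≠ 0) {x : ℝ}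
    (hx : x ∈ Icc 0 θ) (hdigits : ∀ i, 1 ≤ i → i ≤ n → digit θ x i = ℓ i) :
    (gaussMap θ)^[n] x ∈ Icc 0 θ ∧ contFrac θ ℓ n ((gaussMap θ)^[n] x) = x := by
  induction n with
  | zero => exact ⟨hx, rfl⟩
  | succ n ih =>
    obtain ⟨-, hx⟩ := ih (fun i hi hin => hℓ i hi (by omega))
      (fun i hi hin => hdigits i hi (by omega))
    have hdigit : ⌊1 / (θ * (gaussMap θ)^[n] x)⌋ = ℓ (n + 1) := hdigits (n + 1) (by omega) le_rfl
    have hne : (gaussMap θ)^[n] x ≠ 0 := fun h0 =>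
      hℓ (n + 1) (by omega) le_rfl (by rw [← hdigit, h0]; simp)
    rw [Function.iterate_succ_apply']
    exact ⟨Ico_subset_Icc_self (gaussMap_mem_Ico hθ hne),
      by rw [contFrac, ← hdigit, invBranch_gaussMap hne, hx]⟩

theorem subset_closure_setOf_irrational {f : ℝ → ℝ} {U : Set ℝ} (hU : IsOpen U)
    (hf : InjOn f U) : U ⊆ closure {t ∈ U | Irrational (f t)} := by
  set C := {t ∈ U | f t ∈ range ((↑) : ℚ → ℝ)}
  have hC : C.Countable :=
    MapsTo.countable_of_injOn (fun t ht => ht.2) (hf.mono fun t ht => ht.1) (countable_range _)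
  refine ((hC.dense_compl ℝ).open_subset_closure_inter hU).trans (closure_mono ?_)
  exact fun t ⟨htU, htC⟩ => ⟨htU, fun hrat => htC ⟨htU, hrat⟩⟩

theorem contFrac_mem_cylinder (hθ : 0 < θ) (h : Admissible θ n ℓ) {t : ℝ} (ht : t ∈ Ioo 0 θ)
    (hirr : Irrational (contFrac θ ℓ n t)) : contFrac θ ℓ n t ∈ cylinder θ n ℓ :=
  ⟨Ioo_subset_Icc_self (mapsTo_contFrac hθ h ht), hirr, (iterate_gaussMap_contFrac hθ h ht).2⟩

theorem image_Icc_subset_closure_cylinder (hθ : 0 < θ) (h : Admissible θ n ℓ) :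
    contFrac θ ℓ n '' Icc 0 θ ⊆ closure (cylinder θ n ℓ) := by
  set S := {t ∈ Ioo 0 θ | Irrational (contFrac θ ℓ n t)}
  have hinj : InjOn (contFrac θ ℓ n) (Ioo 0 θ) :=
    LeftInvOn.injOn fun t ht => (iterate_gaussMap_contFrac hθ h ht).1
  have hS : closure S = Icc 0 θ := by
    refine (closure_mono (sep_subset _ _)).trans_eq (closure_Ioo hθ.ne) |>.antisymm ?_
    rw [← closure_Ioo hθ.ne]
    exact closure_minimal (subset_closure_setOf_irrational isOpen_Ioo hinj) isClosed_closure
  calc contFrac θ ℓ n '' Icc 0 θ = contFrac θ ℓ n '' closure S := by rw [hS]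
    _ ⊆ closure (contFrac θ ℓ n '' S) :=
      ((continuousOn_contFrac hθ h).mono (hS ▸ Icc_subset_Ici_self)).image_closure
    _ ⊆ closure (cylinder θ n ℓ) :=
      closure_mono (image_subset_iff.mpr fun t ht => contFrac_mem_cylinder hθ h ht.1 ht.2)

theorem diam_cylinder_le (hθ : 0 < θ) (h : Admissible θ n ℓ) :
    Metric.diam (cylinder θ n ℓ) ≤ θ / Qden θ ℓ n ^ 2 := by
  have hℓ : ∀ i, 1 ≤ i → i ≤ n → ℓ i ≠ 0 := fun i hi hin hzero => by
    simpa [hzero] using h.digit_mul_pos hθ hi hin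
  refine Metric.diam_le_of_forall_dist_le (by positivity) fun x hx y hy => ?_
  obtain ⟨hxt, hx⟩ := eq_contFrac_iterate_gaussMap hθ hℓ hx.1 hx.2.2
  obtain ⟨hyt, hy⟩ := eq_contFrac_iterate_gaussMap hθ hℓ hy.1 hy.2.2
  calc dist x y = dist (contFrac θ ℓ n ((gaussMap θ)^[n] x))
        (contFrac θ ℓ n ((gaussMap θ)^[n] y)) := by rw [hx, hy]
    _ ≤ dist ((gaussMap θ)^[n] x) ((gaussMap θ)^[n] y) / Qden θ ℓ n ^ 2 :=
        dist_contFrac_le hθ h hxt.1 hyt.1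
    _ ≤ θ / Qden θ ℓ n ^ 2 := by
        gcongr
        simpa using Real.dist_le_of_mem_Icc hxt hyt

theorem le_diam_cylinder (hθ : 0 < θ) (h : Admissible θ n ℓ) :
    θ / ((1 + θ ^ 2) * Qden θ ℓ n ^ 2) ≤ Metric.diam (cylinder θ n ℓ) := by
  have hQ := Qden_pos hθ h
  have hQ' := prevQden_nonneg hθ h
  have hprev_le := mul_le_mul_of_nonneg_left (prevQden_le hθ h) (mul_nonneg hθ.le hQ.le)
  have hbdd : Bornology.IsBounded (cylinder θ n ℓ) :=
    Metric.isBounded_Icc 0 θ |>.subset fun x hx => hx.1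
  have hends := image_Icc_subset_closure_cylinder hθ h
  calc θ / ((1 + θ ^ 2) * Qden θ ℓ n ^ 2)
      ≤ θ / (Qden θ ℓ n * (Qden θ ℓ n + θ * prevQden θ ℓ n)) :=
        div_le_div_of_nonneg_left hθ.le (by positivity) (by nlinarith)
    _ = dist (contFrac θ ℓ n 0) (contFrac θ ℓ n θ) := by
        rw [dist_contFrac hθ h le_rfl hθ.le, zero_mul, add_zero, dist_zero_left,
          Real.norm_of_nonneg hθ.le]
    _ ≤ Metric.diam (closure (cylinder θ n ℓ)) :=
        Metric.dist_le_diam_of_mem hbdd.closure (hends ⟨0, left_mem_Icc.mpr hθ.le, rfl⟩)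
          (hends ⟨θ, right_mem_Icc.mpr hθ.le, rfl⟩)
    _ = Metric.diam (cylinder θ n ℓ) := Metric.diam_closure _

end ThetaExpansion

open ThetaExpansion in
theorem cylinder_length_bounds_general (θ : ℝ) (m : ℕ) (hm : 0 < m)
    (hθ : θ ∈ Set.Ioo (0 : ℝ) 1) (hθ2 : θ ^ 2 = 1 / m)
    (n : ℕ) (ℓ : ℕ → ℤ) (hℓ : ∀ i : ℕ, 1 ≤ i → i ≤ n → (m : ℤ) ≤ ℓ i) :
    θ / ((1 + θ ^ 2) * (Qden θ ℓ n) ^ 2) ≤ Metric.diam (cylinder θ n ℓ) ∧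
      Metric.diam (cylinder θ n ℓ) ≤ θ / (Qden θ ℓ n) ^ 2 := by
  have hmθ : (m : ℝ) * θ ^ 2 = 1 := by rw [hθ2]; field_simp
  have hadm : Admissible θ n ℓ := fun i hi hin => by
    have hℓi : (m : ℝ) ≤ ℓ i := by exact_mod_cast hℓ i hi hin
    nlinarith [sq_nonneg θ]
  exact ⟨le_diam_cylinder hθ.1 hadm, diam_cylinder_le hθ.1 hadm⟩

/-- `θ/((1+θ²)·Q_n²) ≤ |I_n(ℓ_1,…,ℓ_n)| ≤ θ/Q_n²`. -/
theorem cylinder_length_bounds (θ : ℝ) (m : ℕ) (hm : 0 < m) (hmns : ¬ IsSquare m)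
    (hθ : θ ∈ Set.Ioo (0 : ℝ) 1) (hθirr : Irrational θ) (hθ2 : θ ^ 2 = 1 / m)
    (n : ℕ) (hn : 1 ≤ n) (ℓ : ℕ → ℤ) (hℓ : ∀ i : ℕ, 1 ≤ i → i ≤ n → (m : ℤ) ≤ ℓ i) :
    θ / ((1 + θ ^ 2) * (Qden θ ℓ n) ^ 2) ≤ Metric.diam (cylinder θ n ℓ) ∧
      Metric.diam (cylinder θ n ℓ) ≤ θ / (Qden θ ℓ n) ^ 2 :=
  cylinder_length_bounds_general θ m hm hθ hθ2 n ℓ hℓ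
end
end

section
/- For any n ≥ 1, any 1 ≤ k ≤ n, and any integers ℓ_1, …, ℓ_n with ℓ_i ≥ m for all i, one has ((ℓ_k + m)·θ)/2 ≤ Q_n(ℓ_1,…,ℓ_n) / Q_{n−1}(ℓ_1,…,ℓ_{k−1},ℓ_{k+1},…,ℓ_n) ≤ (ℓ_k + m)·θ, where Q_{n−1}(ℓ_1,…,ℓ_{k−1},ℓ_{k+1},…,ℓ_n) is the denominator of the (n−1)-term sequence obtained by omitting the k-th digit. -/
open Filter Real

noncomputable section

/-- The digit sequence obtained from `ℓ` by omitting the `k`-th digit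
(so the `i`-th new digit is `ℓ_i` for `i < k` and `ℓ_{i+1}` for `i ≥ k`). -/
def omitDigit (k : ℕ) (ℓ : ℕ → ℤ) : ℕ → ℤ := fun i => if i < k then ℓ i else ℓ (i + 1)

section QdenAux
variable {θ : ℝ}


lemma qden_congr (L L' : ℕ → ℤ) : ∀ p, (∀ i, 1 ≤ i → i ≤ p → L i = L' i) → Qden θ L p = Qden θ L' p := by
  intro p
  induction p using Nat.twoStepInduction with
  | zero => intro _; rfl
  | one => intro h; simp only [Qden, h 1 le_rfl le_rfl]
  | more q ih1 ih2 =>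
    intro h
    have e1 := ih1 (fun i h1 h2 => h i h1 (by omega))
    have e2 := ih2 (fun i h1 h2 => h i h1 (by omega))
    show (L (q+2) : ℝ) * θ * Qden θ L (q+1) + Qden θ L q = _
    rw [e1, e2, h (q+2) (by omega) le_rfl]; rfl

lemma one_le_qden (hθ0 : 0 < θ) (L : ℕ → ℤ) : ∀ p, (∀ i, 1 ≤ i → i ≤ p → 1 ≤ (L i : ℝ) * θ) → 1 ≤ Qden θ L p := by
  intro p
  induction p using Nat.twoStepInduction with
  | zero => intro _; exact le_rfl
  | one => intro h; exact h 1 le_rfl le_rfl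
  | more q ih1 ih2 =>
    intro h
    have e1 := ih1 (fun i h1 h2 => h i h1 (by omega))
    have e2 := ih2 (fun i h1 h2 => h i h1 (by omega))
    have h3 := h (q+2) (by omega) le_rfl
    show 1 ≤ (L (q+2) : ℝ) * θ * Qden θ L (q+1) + Qden θ L q
    nlinarith

lemma qden_ratio (hθ0 : 0 < θ) (L : ℕ → ℤ) (p : ℕ)
    (H1 : ∀ i, 1 ≤ i → i ≤ p + 1 → 1 ≤ (L i : ℝ) * θ)
    (H2 : ∀ i, 1 ≤ i → i ≤ p + 1 → 1 ≤ (L i : ℝ) * θ * θ) :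
    Qden θ L p ≤ θ * Qden θ L (p + 1) := by
  cases p with
  | zero =>
    have := H2 1 le_rfl le_rfl
    show (1:ℝ) ≤ θ * ((L 1 : ℝ) * θ)
    nlinarith
  | succ q =>
    have e1 := one_le_qden hθ0 L (q+1) (fun i h1 h2 => H1 i h1 (by omega))
    have e2 := one_le_qden hθ0 L q (fun i h1 h2 => H1 i h1 (by omega))
    have h3 := H2 (q+2) (by omega) le_rfl
    show Qden θ L (q+1) ≤ θ * ((L (q+2) : ℝ) * θ * Qden θ L (q+1) + Qden θ L q)
    nlinarith

lemma qden_front (L : ℕ → ℤ) : ∀ j, Qden θ L (j+1) =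
    (L 1 : ℝ) * θ * Qden θ (fun i => L (i+1)) j +
      (if j = 0 then 0 else Qden θ (fun i => L (i+2)) (j-1)) := by
  intro j
  induction j using Nat.twoStepInduction with
  | zero => simp [Qden]
  | one => show (L 2:ℝ)*θ*((L 1:ℝ)*θ) + 1 = (L 1:ℝ)*θ*((L 2:ℝ)*θ) + 1; ring
  | more q ih1 ih2 =>
    show (L (q+3):ℝ)*θ*Qden θ L (q+2) + Qden θ L (q+1) = _
    rw [ih1, ih2]
    rcases q with _ | r
    · show _ = (L 1:ℝ)*θ*((L 3:ℝ)*θ*((L 2:ℝ)*θ) + 1) + (L 3:ℝ)*θ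
      simp only [if_neg (by omega : ¬(1:ℕ) = 0), if_pos rfl]
      show (L 3:ℝ)*θ*((L 1:ℝ)*θ*((L 2:ℝ)*θ) + 1) + ((L 1:ℝ)*θ*1 + 0) = _
      ring
    · simp only [if_neg (by omega : ¬(r+1:ℕ) = 0), if_neg (by omega : ¬(r+2:ℕ) = 0),
        if_neg (by omega : ¬(r+3:ℕ) = 0)]
      show (L (r+4):ℝ)*θ*((L 1:ℝ)*θ*Qden θ (fun i => L (i+1)) (r+2) + Qden θ (fun i => L (i+2)) (r+1))
            + ((L 1:ℝ)*θ*Qden θ (fun i => L (i+1)) (r+1) + Qden θ (fun i => L (i+2)) r)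
          = (L 1:ℝ)*θ*Qden θ (fun i => L (i+1)) (r+3) + Qden θ (fun i => L (i+2)) (r+2)
      show _ = (L 1:ℝ)*θ*((L (r+4):ℝ)*θ*Qden θ (fun i => L (i+1)) (r+2) + Qden θ (fun i => L (i+1)) (r+1))
          + ((L (r+4):ℝ)*θ*Qden θ (fun i => L (i+2)) (r+1) + Qden θ (fun i => L (i+2)) r)
      ring

lemma qden_tailSplit (L : ℕ → ℤ) (r : ℕ) : ∀ j, Qden θ L (r + j) =
    Qden θ L r * Qden θ (fun i => L (i + r)) j +
      (if r = 0 then 0 else Qden θ L (r-1)) *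
        (if j = 0 then 0 else Qden θ (fun i => L (i + r + 1)) (j-1)) := by
  intro j
  induction j using Nat.twoStepInduction with
  | zero => simp [Qden]
  | one =>
    rcases r with _ | s
    · show Qden θ L 1 = 1 * ((L 1:ℝ)*θ) + _
      simp [Qden]
    · show (L (s+2):ℝ)*θ*Qden θ L (s+1) + Qden θ L s
          = Qden θ L (s+1) * ((L (1+(s+1)):ℝ)*θ) + (if s+1 = 0 then 0 else Qden θ L s) * 1
      simp only [if_neg (by omega : ¬(s+1:ℕ) = 0)]
      have : (1 + (s+1)) = s + 2 := by omega
      rw [this]; ring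
  | more q ih1 ih2 =>
    have hr : r + (q + 2) = (r + q) + 2 := by omega
    rw [hr]
    show (L (r+q+2):ℝ)*θ*Qden θ L (r+q+1) + Qden θ L (r+q) = _
    have h1 : r + q + 1 = r + (q+1) := by omega
    rw [h1, ih1, ih2]
    have hc : (q + 2 + r) = r + q + 2 := by omega
    rcases q with _ | s
    · show _ = Qden θ L r * ((L (2+r):ℝ)*θ*((L (1+r):ℝ)*θ) + 1)
          + (if r = 0 then 0 else Qden θ L (r-1)) * ((L (1+(r+1)):ℝ)*θ)
      simp only [if_neg (by omega : ¬(1:ℕ) = 0), if_pos rfl]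
      show (L (r+0+2):ℝ)*θ*(Qden θ L r * ((L (1+r):ℝ)*θ) + (if r = 0 then 0 else Qden θ L (r-1)) * 1)
            + (Qden θ L r * 1 + (if r = 0 then 0 else Qden θ L (r-1)) * 0) = _
      have e1 : r + 0 + 2 = 2 + r := by omega
      have e2 : 1 + (r + 1) = 2 + r := by omega
      rw [e1, e2]; ring
    · simp only [if_neg (by omega : ¬(s+1:ℕ) = 0), if_neg (by omega : ¬(s+2:ℕ) = 0),
        if_neg (by omega : ¬(s+3:ℕ) = 0)]
      show (L (r+s+3):ℝ)*θ*(Qden θ L r * Qden θ (fun i => L (i+r)) (s+2)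
              + (if r = 0 then 0 else Qden θ L (r-1)) * Qden θ (fun i => L (i+r+1)) (s+1))
            + (Qden θ L r * Qden θ (fun i => L (i+r)) (s+1)
              + (if r = 0 then 0 else Qden θ L (r-1)) * Qden θ (fun i => L (i+r+1)) s)
          = Qden θ L r * Qden θ (fun i => L (i+r)) (s+3)
            + (if r = 0 then 0 else Qden θ L (r-1)) * Qden θ (fun i => L (i+r+1)) (s+2)
      have e3 : Qden θ (fun i => L (i+r)) (s+3)
          = (L (s+3+r):ℝ)*θ*Qden θ (fun i => L (i+r)) (s+2) + Qden θ (fun i => L (i+r)) (s+1) := rfl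
      have e4 : Qden θ (fun i => L (i+r+1)) (s+2)
          = (L (s+2+r+1):ℝ)*θ*Qden θ (fun i => L (i+r+1)) (s+1) + Qden θ (fun i => L (i+r+1)) s := rfl
      rw [e3, e4]
      have e5 : s+3+r = r+s+3 := by omega
      have e6 : s+2+r+1 = r+s+3 := by omega
      rw [e5, e6]; ring

end QdenAux

set_option maxHeartbeats 1000000 in
/-- `((ℓ_k+m)·θ)/2 ≤ Q_n(ℓ_1,…,ℓ_n)/Q_{n−1}(ℓ_1,…,ℓ_{k−1},ℓ_{k+1},…,ℓ_n)
≤ (ℓ_k+m)·θ`. -/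
theorem Qden_omit_digit_ratio (θ : ℝ) (m : ℕ) (hm : 0 < m) (hmns : ¬ IsSquare m)
    (hθ : θ ∈ Set.Ioo (0 : ℝ) 1) (hθirr : Irrational θ) (hθ2 : θ ^ 2 = 1 / m)
    (n k : ℕ) (hn : 1 ≤ n) (hk1 : 1 ≤ k) (hkn : k ≤ n)
    (ℓ : ℕ → ℤ) (hℓ : ∀ i : ℕ, 1 ≤ i → i ≤ n → (m : ℤ) ≤ ℓ i) :
    ((ℓ k : ℝ) + m) * θ / 2 ≤ Qden θ ℓ n / Qden θ (omitDigit k ℓ) (n - 1) ∧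
      Qden θ ℓ n / Qden θ (omitDigit k ℓ) (n - 1) ≤ ((ℓ k : ℝ) + m) * θ := by
  obtain ⟨hθ0, hθ1⟩ := hθ
  have hm2 : 2 ≤ m := by
    have : m ≠ 1 := fun h => hmns (h ▸ ⟨1, rfl⟩)
    omega
  have hm0 : (m : ℝ) ≠ 0 := by positivity
  have hsθ : (m : ℝ) * θ * θ = 1 := by
    have : (m : ℝ) * θ * θ = (m : ℝ) * θ ^ 2 := by ring
    rw [this, hθ2]; field_simp
  have hs1 : 1 ≤ (m : ℝ) * θ := by nlinarith
  have h2θ : 2 * θ ≤ (m : ℝ) * θ := by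
    have : (2 : ℝ) ≤ m := by exact_mod_cast hm2
    nlinarith
  have hℓR : ∀ i, 1 ≤ i → i ≤ n → (m : ℝ) ≤ (ℓ i : ℝ) := fun i h1 h2 => by
    exact_mod_cast hℓ i h1 h2
  have H1 : ∀ i, 1 ≤ i → i ≤ n → 1 ≤ (ℓ i : ℝ) * θ := fun i h1 h2 => by
    have := hℓR i h1 h2; nlinarith
  have H2 : ∀ i, 1 ≤ i → i ≤ n → 1 ≤ (ℓ i : ℝ) * θ * θ := fun i h1 h2 => by
    have := hℓR i h1 h2; nlinarith
  obtain ⟨K, rfl⟩ : ∃ K, k = K + 1 := ⟨k - 1, by omega⟩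
  obtain ⟨j, rfl⟩ : ∃ j, n = K + 1 + j := ⟨n - (K + 1), by omega⟩
  have hn1 : K + 1 + j - 1 = K + j := by omega
  rw [hn1]
  set B := Qden θ (fun i => ℓ (i + (K + 1))) j with hBdef
  set C : ℝ := if j = 0 then 0 else Qden θ (fun i => ℓ (i + (K + 1) + 1)) (j - 1) with hCdef
  set Y := Qden θ ℓ K with hYdef
  set X := Qden θ ℓ (K + 1) with hXdef
  set Z : ℝ := if K = 0 then 0 else Qden θ ℓ (K - 1) with hZdef
  -- numerator identity
  have hnum : Qden θ ℓ (K + 1 + j) = X * B + Y * C := by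
    have h := qden_tailSplit (θ := θ) ℓ (K + 1) j
    rw [if_neg (by omega : ¬ K + 1 = 0)] at h
    exact h
  -- denominator identity
  have hden : Qden θ (omitDigit (K + 1) ℓ) (K + j) = Y * B + Z * C := by
    have h := qden_tailSplit (θ := θ) (omitDigit (K + 1) ℓ) K j
    have c1 : Qden θ (omitDigit (K + 1) ℓ) K = Y :=
      qden_congr _ _ K (fun i h1 h2 => by
        simp only [omitDigit, if_pos (show i < K + 1 by omega)])
    have c2 : Qden θ (fun i => omitDigit (K + 1) ℓ (i + K)) j = B :=
      qden_congr _ _ j (fun i h1 h2 => by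
        simp only [omitDigit, if_neg (show ¬ i + K < K + 1 by omega)]
        exact congrArg ℓ (by omega))
    have c3 : (if K = 0 then (0:ℝ) else Qden θ (omitDigit (K + 1) ℓ) (K - 1)) = Z := by
      rcases K with _ | s
      · simp [hZdef]
      · simp only [hZdef, if_neg (show ¬ s + 1 = 0 by omega)]
        exact qden_congr _ _ s (fun i h1 h2 => by
          simp only [omitDigit, if_pos (show i < s + 1 + 1 by omega)])
    have c4 : (if j = 0 then (0:ℝ) else Qden θ (fun i => omitDigit (K + 1) ℓ (i + K + 1)) (j - 1)) = C := by
      rcases j with _ | q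
      · simp [hCdef]
      · simp only [hCdef, if_neg (show ¬ q + 1 = 0 by omega)]
        exact qden_congr _ _ q (fun i h1 h2 => by
          simp only [omitDigit, if_neg (show ¬ i + K + 1 < K + 1 by omega)]
          exact congrArg ℓ (by omega))
    rw [c1, c2, c3, c4] at h
    exact h
  -- basic facts
  have hY : 1 ≤ Y := one_le_qden hθ0 ℓ K (fun i h1 h2 => H1 i h1 (by omega))
  have hB : 1 ≤ B := one_le_qden hθ0 _ j (fun i h1 h2 => H1 (i + (K + 1)) (by omega) (by omega))
  have hX : X = (ℓ (K + 1) : ℝ) * θ * Y + Z := by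
    rcases K with _ | s
    · simp only [hXdef, hYdef, hZdef, if_pos rfl]
      show (ℓ 1 : ℝ) * θ = (ℓ (0+1) : ℝ) * θ * Qden θ ℓ 0 + 0
      show (ℓ 1 : ℝ) * θ = (ℓ (0+1) : ℝ) * θ * 1 + 0
      ring
    · simp only [hXdef, hYdef, hZdef, if_neg (show ¬ s + 1 = 0 by omega)]
      rfl
  have hZ0 : 0 ≤ Z := by
    rcases K with _ | s
    · simp [hZdef]
    · simp only [hZdef, if_neg (show ¬ s + 1 = 0 by omega)]
      have := one_le_qden hθ0 ℓ s (fun i h1 h2 => H1 i h1 (by omega))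
      simpa using le_trans zero_le_one this
  have hZθ : Z ≤ θ * Y := by
    rcases K with _ | s
    · simp only [hZdef, if_pos rfl]
      positivity
    · simp only [hZdef, if_neg (show ¬ s + 1 = 0 by omega)]
      exact qden_ratio hθ0 ℓ s (fun i h1 h2 => H1 i h1 (by omega))
        (fun i h1 h2 => H2 i h1 (by omega))
  have hC0 : 0 ≤ C := by
    rcases j with _ | q
    · simp [hCdef]
    · simp only [hCdef, if_neg (show ¬ q + 1 = 0 by omega)]
      have := one_le_qden hθ0 (fun i => ℓ (i + (K + 1) + 1)) q
        (fun i h1 h2 => H1 (i + (K + 1) + 1) (by omega) (by omega))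
      simpa using le_trans zero_le_one this
  have hCθ : C ≤ θ * B := by
    rcases j with _ | q
    · simp only [hCdef, if_pos rfl]
      positivity
    · have hfr := qden_front (θ := θ) (fun i => ℓ (i + (K + 1))) q
      beta_reduce at hfr
      have e1 : (1 : ℕ) + (K + 1) = K + 2 := by omega
      rw [e1] at hfr
      have e2 : Qden θ (fun i => ℓ (i + 1 + (K + 1))) q
          = Qden θ (fun i => ℓ (i + (K + 1) + 1)) q :=
        qden_congr _ _ q (fun i _ _ => by congr 1; omega)
      rw [e2] at hfr
      have hG0 : (0:ℝ) ≤ (if q = 0 then 0 else Qden θ (fun i => ℓ (i + 2 + (K + 1))) (q - 1)) := by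
        rcases q with _ | r
        · simp
        · simp only [if_neg (show ¬ r + 1 = 0 by omega)]
          have := one_le_qden hθ0 (fun i => ℓ (i + 2 + (K + 1))) r
            (fun i h1 h2 => H1 (i + 2 + (K + 1)) (by omega) (by omega))
          simpa using le_trans zero_le_one this
      have hCeq : C = Qden θ (fun i => ℓ (i + (K + 1) + 1)) q := by
        simp [hCdef]
      have hBeq : B = Qden θ (fun i => ℓ (i + (K + 1))) (q + 1) := rfl
      have hK2 := H2 (K + 2) (by omega) (by omega)
      rw [hCeq, hBeq, hfr]
      set Cq := Qden θ (fun i => ℓ (i + (K + 1) + 1)) q with hCq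
      have hCq0 : 0 ≤ Cq := by
        have := one_le_qden hθ0 (fun i => ℓ (i + (K + 1) + 1)) q
          (fun i h1 h2 => H1 (i + (K + 1) + 1) (by omega) (by omega))
        linarith
      nlinarith
  have hdenpos : (0:ℝ) < Y * B + Z * C := by nlinarith
  have ht : (m : ℝ) * θ ≤ (ℓ (K + 1) : ℝ) * θ := by
    have := hℓR (K + 1) (by omega) (by omega)
    nlinarith
  have hZCYB : Z * C ≤ Y * B := by
    have h6 : Z * C ≤ θ * Y * (θ * B) := by
      apply mul_le_mul hZθ hCθ hC0 (by positivity)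
    have hYB0 : (0:ℝ) ≤ Y * B := by nlinarith
    have h7 : (0:ℝ) ≤ (1 - θ * θ) * (Y * B) := mul_nonneg (by nlinarith) hYB0
    nlinarith [h6, h7]
  have hBmC : (0:ℝ) ≤ B - (m:ℝ)*θ*C := by nlinarith
  rw [hnum, hden, hX]
  constructor
  · rw [div_le_div_iff₀ (by norm_num : (0:ℝ) < 2) hdenpos]
    nlinarith [mul_nonneg hZ0 hC0, mul_nonneg (mul_nonneg hZ0 hC0) (le_trans (by linarith) ht),
      mul_nonneg hZ0 hBmC,
      mul_nonneg (by linarith : (0:ℝ) ≤ (ℓ (K+1):ℝ)*θ - (m:ℝ)*θ) (by linarith : (0:ℝ) ≤ Y*B - Z*C),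
      mul_nonneg (le_trans zero_le_one hY) hC0]
  · rw [div_le_iff₀ hdenpos]
    nlinarith [mul_nonneg (by linarith : (0:ℝ) ≤ θ*Y - Z) (by linarith : (0:ℝ) ≤ B),
      mul_nonneg (by linarith : (0:ℝ) ≤ θ*B - C) (by linarith : (0:ℝ) ≤ Y),
      mul_nonneg (by linarith : (0:ℝ) ≤ (m:ℝ)*θ - 2*θ) (by nlinarith : (0:ℝ) ≤ Y*B),
      mul_nonneg (by linarith : (0:ℝ) ≤ (ℓ (K+1):ℝ)*θ + (m:ℝ)*θ) (mul_nonneg hZ0 hC0)]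
end
end

section
/- For any integer M > 2m+1, the set X_M = { x ∈ [0,θ] \ ℚ : m ≤ ℓ_n(x) ≤ M for all n ≥ 1 } satisfies the upper dimension bound dim_H(X_M) ≤ 1 − (m/(M+2))·(1/log(2M(M+1)/m)). -/
open Filter Real

noncomputable section

/-- The set `X_M` of irrationals in `[0,θ]` with all digits between `m` and `M`. -/
def XMset (θ : ℝ) (m M : ℕ) : Set ℝ :=
  {x | x ∈ Set.Icc 0 θ ∧ Irrational x ∧
    ∀ n : ℕ, 1 ≤ n → (m : ℤ) ≤ digit θ x n ∧ digit θ x n ≤ (M : ℤ)}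

/-!
Cover `X_M` at generation `n` by the cylinders `I(w)`, the images of `[0, θ]` under the inverse
branches `branch θ w`, `w ∈ [m, M]ⁿ`. Each inverse branch is a Möbius map
`t ↦ (p + p' t) / (q + q' t)` of determinant `±1`, so `|I(w)| = θ / (q (q + θ q'))`, and the
continuant recursion gives `mⁿ ≤ q (q + θ q') ≤ Kⁿ` with `K = (M + 1)(M + 2) / m`.
The children of a cylinder with digits in `[m, M]` miss the image of `[0, 1 / (θ (M + 1)))`, which
by bounded distortion is at least the proportion `m / (M + 1)` of it, so
`∑ |I(w)| ≤ θ (1 - m / (M + 1))ⁿ`. With `|I(w)| ≥ θ K⁻ⁿ` this gives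
`∑ |I(w)|^(1 - ε) ≤ θ^(1 - ε) (K^ε (1 - m / (M + 1)))ⁿ → 0` whenever `ε log K < m / (M + 1)`,
and `ε = m / ((M + 2) log (2M(M + 1) / m))` is such an exponent.
-/

open Set MeasureTheory Metric
open scoped ENNReal NNReal Topology

theorem dimH_le_of_tendsto_sum_ediam_rpow {X : Type*} [EMetricSpace X] [MeasurableSpace X]
    [BorelSpace X] {E : Set X} {ι : ℕ → Type*} [∀ n, Fintype (ι n)] (U : ∀ n, ι n → Set X)
    (hE : ∀ n, E ⊆ ⋃ i, U n i) {r : ℕ → ℝ≥0∞} (hr : Tendsto r atTop (𝓝 0))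
    (hU : ∀ n i, ediam (U n i) ≤ r n) {d : ℝ≥0}
    (hsum : Tendsto (fun n => ∑ i, ediam (U n i) ^ (d : ℝ)) atTop (𝓝 0)) : dimH E ≤ d := by
  refine dimH_le_of_hausdorffMeasure_ne_top (ne_top_of_le_ne_top ENNReal.zero_ne_top ?_)
  rw [← hsum.liminf_eq]
  exact Measure.hausdorffMeasure_le_liminf_sum _ E r hr U (.of_forall (hU ·)) (.of_forall hE)

theorem Real.ediam_uIcc (a b : ℝ) : ediam (uIcc a b) = ENNReal.ofReal |b - a| := by
  rw [← Icc_min_max, Real.ediam_Icc, max_sub_min_eq_abs', abs_sub_comm]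

theorem Real.rpow_mul_one_sub_lt_one {K c ε : ℝ} (hK : 0 < K) (hc : c < 1)
    (h : ε * Real.log K < c) : K ^ ε * (1 - c) < 1 := by
  have hc' : 0 < 1 - c := sub_pos.2 hc
  rw [← Real.log_neg_iff (by positivity), Real.log_mul (by positivity) hc'.ne',
    Real.log_rpow hK]
  linarith [Real.log_le_sub_one_of_pos hc']

namespace ThetaExpansion

variable {θ : ℝ}

lemma gaussMap_eq_mul_fract (hθ : θ ≠ 0) {t : ℝ} (ht : t ≠ 0) :
    gaussMap θ t = θ * Int.fract (1 / (θ * t)) := by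
  rw [gaussMap, if_neg ht, Int.fract]
  field_simp

lemma gaussMap_mem_Icc (hθ : 0 < θ) (t : ℝ) : gaussMap θ t ∈ Icc 0 θ := by
  rcases eq_or_ne t 0 with rfl | ht
  · simp [gaussMap, hθ.le]
  · rw [gaussMap_eq_mul_fract hθ.ne' ht]
    exact ⟨mul_nonneg hθ.le (Int.fract_nonneg _),
      mul_le_of_le_one_right hθ.le (Int.fract_lt_one _).le⟩

lemma eq_one_div_add_gaussMap {t : ℝ} (ht : t ≠ 0) :
    t = 1 / (θ * ⌊1 / (θ * t)⌋ + gaussMap θ t) := by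
  rw [gaussMap, if_neg ht]
  simp

lemma iterate_gaussMap_mem_Icc (hθ : 0 < θ) {x : ℝ} (hx : x ∈ Icc 0 θ) :
    ∀ n, (gaussMap θ)^[n] x ∈ Icc 0 θ
  | 0 => hx
  | n + 1 => by
    rw [Function.iterate_succ_apply']
    exact gaussMap_mem_Icc hθ _

/-- `branch θ [ℓₙ, …, ℓ₁] t = 1 / (θ ℓ₁ + 1 / (θ ℓ₂ + ⋯ + 1 / (θ ℓₙ + t)))`: words list the most
recent digit first, so that `x = branch θ [ℓₙ, …, ℓ₁] (T_θⁿ x)`. -/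
def branch (θ : ℝ) : List ℕ → ℝ → ℝ
  | [], t => t
  | ℓ :: w, t => branch θ w (1 / (θ * ℓ + t))

/-- `den θ w = (q, q')` where `branch θ w t = (p + p' t) / (q + q' t)`. -/
def den (θ : ℝ) : List ℕ → ℝ × ℝ
  | [] => (1, 0)
  | ℓ :: w => (θ * ℓ * (den θ w).1 + (den θ w).2, (den θ w).1)

def denAt (θ : ℝ) (w : List ℕ) (t : ℝ) : ℝ := (den θ w).1 + (den θ w).2 * t

lemma denAt_cons (ℓ : ℕ) (w : List ℕ) {t : ℝ} (ht : θ * ℓ + t ≠ 0) :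
    denAt θ (ℓ :: w) t = denAt θ w (1 / (θ * ℓ + t)) * (θ * ℓ + t) := by
  simp only [denAt, den]
  field_simp
  ring

lemma den_fst_pos_and_snd_nonneg (hθ : 0 < θ) :
    ∀ {w : List ℕ}, (∀ ℓ ∈ w, 0 < ℓ) → 0 < (den θ w).1 ∧ 0 ≤ (den θ w).2
  | [], _ => by simp [den]
  | ℓ :: w, hw => by
    obtain ⟨hq, hq'⟩ := den_fst_pos_and_snd_nonneg hθ fun k hk => hw k (List.mem_cons_of_mem _ hk)
    have hℓ : (0 : ℝ) < ℓ := by exact_mod_cast hw ℓ List.mem_cons_self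
    exact ⟨by simp only [den]; positivity, hq.le⟩

lemma denAt_pos (hθ : 0 < θ) {w : List ℕ} (hw : ∀ ℓ ∈ w, 0 < ℓ) {t : ℝ} (ht : 0 ≤ t) :
    0 < denAt θ w t := by
  obtain ⟨hq, hq'⟩ := den_fst_pos_and_snd_nonneg hθ hw
  exact add_pos_of_pos_of_nonneg hq (mul_nonneg hq' ht)

lemma denAt_mono (hθ : 0 < θ) {w : List ℕ} (hw : ∀ ℓ ∈ w, 0 < ℓ) {a b : ℝ} (hab : a ≤ b) :
    denAt θ w a ≤ denAt θ w b := by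
  have := (den_fst_pos_and_snd_nonneg hθ hw).2
  unfold denAt
  gcongr

lemma sign_mul_branch_sub (hθ : 0 < θ) :
    ∀ {w : List ℕ}, (∀ ℓ ∈ w, 0 < ℓ) → ∀ {a b : ℝ}, 0 ≤ a → 0 ≤ b →
      (-1) ^ w.length * (branch θ w b - branch θ w a) = (b - a) / (denAt θ w a * denAt θ w b)
  | [], _, a, b, _, _ => by simp [branch, denAt, den]
  | ℓ :: w, hw, a, b, ha, hb => by
    have hw' : ∀ k ∈ w, 0 < k := fun k hk => hw k (List.mem_cons_of_mem _ hk)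
    have hℓ : (0 : ℝ) < ℓ := by exact_mod_cast hw ℓ List.mem_cons_self
    have hA : 0 < θ * ℓ + a := by positivity
    have hB : 0 < θ * ℓ + b := by positivity
    have ih := sign_mul_branch_sub hθ hw' (one_div_pos.2 hA).le (one_div_pos.2 hB).le
    have hDa := denAt_pos hθ hw' (one_div_pos.2 hA).le
    have hDb := denAt_pos hθ hw' (one_div_pos.2 hB).le
    simp only [branch, List.length_cons, pow_succ]
    rw [denAt_cons ℓ w hA.ne', denAt_cons ℓ w hB.ne', mul_comm _ (-1 : ℝ), mul_assoc, ih]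
    field_simp
    ring

def cylLen (θ : ℝ) (w : List ℕ) : ℝ := |branch θ w θ - branch θ w 0|

lemma cylLen_nonneg (θ : ℝ) (w : List ℕ) : 0 ≤ cylLen θ w := abs_nonneg _

def cylinder (θ : ℝ) (w : List ℕ) : Set ℝ := uIcc (branch θ w 0) (branch θ w θ)

lemma ediam_cylinder (θ : ℝ) (w : List ℕ) : ediam (cylinder θ w) = ENNReal.ofReal (cylLen θ w) :=
  Real.ediam_uIcc _ _

section Cylinder

variable (hθ : 0 < θ) {w : List ℕ} (hw : ∀ ℓ ∈ w, 0 < ℓ)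
include hθ hw

lemma abs_branch_sub {a b : ℝ} (ha : 0 ≤ a) (hb : 0 ≤ b) :
    |branch θ w b - branch θ w a| = |b - a| / (denAt θ w a * denAt θ w b) := by
  calc |branch θ w b - branch θ w a|
      = |(-1) ^ w.length * (branch θ w b - branch θ w a)| := by simp [abs_mul]
    _ = _ := by
      rw [sign_mul_branch_sub hθ hw ha hb, abs_div,
        abs_of_pos (mul_pos (denAt_pos hθ hw ha) (denAt_pos hθ hw hb))]

lemma cylLen_eq : cylLen θ w = θ / (denAt θ w 0 * denAt θ w θ) := by
  rw [cylLen, abs_branch_sub hθ hw le_rfl hθ.le, sub_zero, abs_of_pos hθ]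

lemma sign_mul_branch_sub_nonneg {a b : ℝ} (ha : 0 ≤ a) (hab : a ≤ b) :
    0 ≤ (-1) ^ w.length * (branch θ w b - branch θ w a) := by
  rw [sign_mul_branch_sub hθ hw ha (ha.trans hab)]
  exact div_nonneg (sub_nonneg.2 hab)
    (mul_pos (denAt_pos hθ hw ha) (denAt_pos hθ hw (ha.trans hab))).le

lemma branch_mem_cylinder {t : ℝ} (ht : t ∈ Icc 0 θ) : branch θ w t ∈ cylinder θ w := by
  have h₁ := sign_mul_branch_sub_nonneg hθ hw le_rfl ht.1
  have h₂ := sign_mul_branch_sub_nonneg hθ hw ht.1 ht.2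
  rcases Nat.even_or_odd w.length with he | ho
  · rw [he.neg_one_pow, one_mul] at h₁ h₂
    exact mem_uIcc.2 (Or.inl ⟨by linarith, by linarith⟩)
  · rw [ho.neg_one_pow, neg_one_mul] at h₁ h₂
    exact mem_uIcc.2 (Or.inr ⟨by linarith, by linarith⟩)

lemma abs_branch_sub_of_le {a b : ℝ} (ha : 0 ≤ a) (hab : a ≤ b) :
    |branch θ w b - branch θ w a| = (-1) ^ w.length * (branch θ w b - branch θ w a) := by
  rw [← abs_of_nonneg (sign_mul_branch_sub_nonneg hθ hw ha hab), abs_mul]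
  simp

lemma abs_branch_sub_le_mul_cylLen {a : ℝ} (ha : a ∈ Icc 0 θ) :
    |branch θ w θ - branch θ w a| ≤ (θ - a) / θ * cylLen θ w := by
  have hD : ∀ {t : ℝ}, 0 ≤ t → 0 < denAt θ w t := denAt_pos hθ hw
  rw [abs_branch_sub hθ hw ha.1 hθ.le, cylLen_eq hθ hw, abs_of_nonneg (sub_nonneg.2 ha.2),
    div_mul_div_cancel₀ hθ.ne']
  gcongr
  · exact sub_nonneg.2 ha.2
  · exact mul_pos (hD le_rfl) (hD hθ.le)
  · exact (hD hθ.le).le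
  · exact denAt_mono hθ hw ha.1

end Cylinder

section Continuant

variable {m : ℕ} (hθ : 0 < θ) (hmθ : θ ^ 2 * m = 1)
include hθ hmθ

omit hθ in
lemma pos_of_le_of_sq_mul_eq_one {ℓ : ℕ} (hℓ : m ≤ ℓ) : 0 < ℓ :=
  (Nat.pos_of_ne_zero (by rintro rfl; simp at hmθ)).trans_le hℓ

lemma den_snd_le : ∀ {w : List ℕ}, (∀ ℓ ∈ w, m ≤ ℓ) → (den θ w).2 ≤ θ * (den θ w).1
  | [], _ => by simp [den, hθ.le]
  | ℓ :: w, hw => by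
    have hw' : ∀ k ∈ w, m ≤ k := fun k hk => hw k (List.mem_cons_of_mem _ hk)
    have ih := den_snd_le hw'
    obtain ⟨hq, hq'⟩ := den_fst_pos_and_snd_nonneg hθ fun k hk =>
      pos_of_le_of_sq_mul_eq_one hmθ (hw' k hk)
    have hℓ : (m : ℝ) ≤ ℓ := by exact_mod_cast hw ℓ List.mem_cons_self
    have : 1 ≤ θ ^ 2 * ℓ := hmθ ▸ by gcongr
    simp only [den]
    nlinarith

lemma pow_le_denAt_mul :
    ∀ {w : List ℕ}, (∀ ℓ ∈ w, m ≤ ℓ) → (m : ℝ) ^ w.length ≤ denAt θ w 0 * denAt θ w θ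
  | [], _ => by simp [denAt, den]
  | ℓ :: w, hw => by
    have hw' : ∀ k ∈ w, m ≤ k := fun k hk => hw k (List.mem_cons_of_mem _ hk)
    have ih := pow_le_denAt_mul hw'
    have hq'θ := den_snd_le hθ hmθ hw'
    obtain ⟨hq, hq'⟩ := den_fst_pos_and_snd_nonneg hθ fun k hk =>
      pos_of_le_of_sq_mul_eq_one hmθ (hw' k hk)
    have hℓ : (m : ℝ) ≤ ℓ := by exact_mod_cast hw ℓ List.mem_cons_self
    simp only [denAt, den, List.length_cons, pow_succ] at ih ⊢
    set q := (den θ w).1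
    set q' := (den θ w).2
    have hstep : m * (q * (q + q' * θ)) ≤
        (θ * ℓ * q + q' + q * 0) * (θ * ℓ * q + q' + q * θ) := by
      have h₁ : (m + 1) * q ^ 2 ≤ θ ^ 2 * (ℓ * (ℓ + 1)) * q ^ 2 := by
        have : θ ^ 2 * (m * (m + 1)) ≤ θ ^ 2 * (ℓ * (ℓ + 1)) := by gcongr
        gcongr
        linear_combination this - (m + 1) * hmθ
      have h₂ : m * (q * (q + q' * θ)) ≤ (m + 1) * q ^ 2 := by
        nlinarith [mul_le_mul_of_nonneg_left hq'θ (by positivity : (0 : ℝ) ≤ m * q * θ)]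
      have h₃ : 0 ≤ q' * (θ * ℓ * q + q' + q * θ) + θ * ℓ * q * q' := by positivity
      nlinarith
    nlinarith [(by positivity : (0 : ℝ) ≤ m)]

lemma denAt_mul_le_pow {M : ℕ} :
    ∀ {w : List ℕ}, (∀ ℓ ∈ w, ℓ ∈ Finset.Icc m M) →
      denAt θ w 0 * denAt θ w θ ≤ (((M : ℝ) + 1) * (M + 2) / m) ^ w.length
  | [], _ => by simp [denAt, den]
  | ℓ :: w, hw => by
    have hw' : ∀ k ∈ w, k ∈ Finset.Icc m M := fun k hk => hw k (List.mem_cons_of_mem _ hk)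
    have hwm : ∀ k ∈ w, m ≤ k := fun k hk => (Finset.mem_Icc.1 (hw' k hk)).1
    have ih := denAt_mul_le_pow hw'
    have hq'θ := den_snd_le hθ hmθ hwm
    obtain ⟨hq, hq'⟩ := den_fst_pos_and_snd_nonneg hθ fun k hk =>
      pos_of_le_of_sq_mul_eq_one hmθ (hwm k hk)
    have hℓM : (ℓ : ℝ) ≤ M := by exact_mod_cast (Finset.mem_Icc.1 (hw ℓ List.mem_cons_self)).2
    have hm : (0 : ℝ) < m := by exact_mod_cast pos_of_le_of_sq_mul_eq_one hmθ le_rfl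
    simp only [denAt, den, List.length_cons, pow_succ] at ih ⊢
    set q := (den θ w).1
    set q' := (den θ w).2
    set K := ((M : ℝ) + 1) * (M + 2) / m
    have hstep : (θ * ℓ * q + q' + q * 0) * (θ * ℓ * q + q' + q * θ) ≤
        K * (q * (q + q' * θ)) := by
      have h₁ : (θ * ℓ * q + q' + q * 0) * (θ * ℓ * q + q' + q * θ) ≤
          θ ^ 2 * ((ℓ + 1) * (ℓ + 2)) * q ^ 2 := by
        have : θ * ℓ * q + q' ≤ θ * (ℓ + 1) * q := by linarith
        nlinarith [mul_le_mul this (by linarith : θ * ℓ * q + q' + q * θ ≤ θ * (ℓ + 2) * q)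
          (by positivity) (by positivity)]
      have h₂ : θ ^ 2 * ((ℓ + 1) * (ℓ + 2)) * q ^ 2 ≤ K * q ^ 2 := by
        have hθ2 : θ ^ 2 = 1 / m := by field_simp; linarith
        rw [hθ2, one_div_mul_eq_div]
        unfold K
        gcongr
      nlinarith [mul_nonneg (mul_nonneg hq.le hq') hθ.le, (by positivity : 0 ≤ K)]
    calc _ ≤ K * (q * (q + q' * θ)) := hstep
      _ ≤ K * K ^ w.length := by gcongr; simpa using ih
      _ = K ^ w.length * K := mul_comm _ _

lemma cylLen_le_div_pow {w : List ℕ} (hw : ∀ ℓ ∈ w, m ≤ ℓ) :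
    cylLen θ w ≤ θ / (m : ℝ) ^ w.length := by
  have hm : 0 < m := pos_of_le_of_sq_mul_eq_one hmθ le_rfl
  rw [cylLen_eq hθ fun ℓ hℓ => pos_of_le_of_sq_mul_eq_one hmθ (hw ℓ hℓ)]
  gcongr
  exact pow_le_denAt_mul hθ hmθ hw

lemma div_pow_le_cylLen {M : ℕ} {w : List ℕ} (hw : ∀ ℓ ∈ w, ℓ ∈ Finset.Icc m M) :
    θ / (((M : ℝ) + 1) * (M + 2) / m) ^ w.length ≤ cylLen θ w := by
  have hwm : ∀ ℓ ∈ w, m ≤ ℓ := fun ℓ hℓ => (Finset.mem_Icc.1 (hw ℓ hℓ)).1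
  have hw₀ : ∀ ℓ ∈ w, 0 < ℓ := fun ℓ hℓ => pos_of_le_of_sq_mul_eq_one hmθ (hwm ℓ hℓ)
  rw [cylLen_eq hθ hw₀]
  gcongr
  · exact mul_pos (denAt_pos hθ hw₀ le_rfl) (denAt_pos hθ hw₀ hθ.le)
  · exact denAt_mul_le_pow hθ hmθ hw

lemma sum_cylLen_cons_le {M : ℕ} (hmM : m ≤ M) {w : List ℕ} (hw : ∀ ℓ ∈ w, m ≤ ℓ) :
    ∑ ℓ ∈ Finset.Icc m M, cylLen θ (ℓ :: w) ≤ (1 - m / ((M : ℝ) + 1)) * cylLen θ w := by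
  have hw₀ : ∀ ℓ ∈ w, 0 < ℓ := fun ℓ hℓ => pos_of_le_of_sq_mul_eq_one hmθ (hw ℓ hℓ)
  have hm : (0 : ℝ) < m := by exact_mod_cast pos_of_le_of_sq_mul_eq_one hmθ le_rfl
  set g : ℕ → ℝ := fun k => (-1) ^ w.length * branch θ w (1 / (θ * k))
  have hcons : ∀ ℓ ∈ Finset.Icc m M, cylLen θ (ℓ :: w) = -(g (ℓ + 1) - g ℓ) := by
    intro ℓ hℓ
    have hℓ : (0 : ℝ) < ℓ := by
      exact_mod_cast pos_of_le_of_sq_mul_eq_one hmθ (Finset.mem_Icc.1 hℓ).1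
    have hle : 1 / (θ * (ℓ + 1 : ℕ)) ≤ 1 / (θ * ℓ) := by gcongr; linarith
    rw [cylLen, branch, branch, abs_sub_comm, add_zero, ← mul_add_one θ,
      ← Nat.cast_add_one, abs_branch_sub_of_le hθ hw₀ (by positivity) hle]
    ring
  have hgm : g m = (-1) ^ w.length * branch θ w θ := by
    have : 1 / (θ * m) = θ := by
      field_simp
      linear_combination -hmθ
    simp only [g, this]
  have hgM : g (M + 1) = (-1) ^ w.length * branch θ w (m / ((M : ℝ) + 1) * θ) := by
    have : 1 / (θ * (M + 1 : ℕ)) = m / ((M : ℝ) + 1) * θ := by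
      push_cast
      field_simp
      linear_combination -hmθ
    simp only [g, this]
  have hgM0 : 0 ≤ m / ((M : ℝ) + 1) * θ := by positivity
  have hgMθ : m / ((M : ℝ) + 1) * θ ≤ θ := by
    refine mul_le_of_le_one_left hθ.le ((div_le_one (by positivity)).2 ?_)
    exact_mod_cast Nat.le_succ_of_le hmM
  rw [Finset.sum_congr rfl hcons, Finset.sum_neg_distrib, Finset.sum_Icc_sub hmM, neg_sub, hgm,
    hgM, ← mul_sub, ← abs_branch_sub_of_le hθ hw₀ hgM0 hgMθ]
  calc _ ≤ (θ - m / ((M : ℝ) + 1) * θ) / θ * cylLen θ w :=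
        abs_branch_sub_le_mul_cylLen hθ hw₀ ⟨hgM0, hgMθ⟩
    _ = _ := by field_simp

end Continuant

def words (m M : ℕ) : ℕ → Finset (List ℕ)
  | 0 => {[]}
  | n + 1 => (words m M n ×ˢ Finset.Icc m M).image fun p => p.2 :: p.1

lemma mem_words {m M n : ℕ} {w : List ℕ} :
    w ∈ words m M n ↔ w.length = n ∧ ∀ ℓ ∈ w, ℓ ∈ Finset.Icc m M := by
  induction n generalizing w with
  | zero => simp +contextual [words]
  | succ n ih =>
    cases w with
    | nil => simp [words]
    | cons ℓ w => simp [words, ih]; tauto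

lemma le_of_mem_words {m M n ℓ : ℕ} {w : List ℕ} (hw : w ∈ words m M n) (hℓ : ℓ ∈ w) : m ≤ ℓ :=
  (Finset.mem_Icc.1 ((mem_words.1 hw).2 ℓ hℓ)).1

lemma sum_words_cylLen_le {m M : ℕ} (hθ : 0 < θ) (hmθ : θ ^ 2 * m = 1) (hmM : m ≤ M) (n : ℕ) :
    ∑ w ∈ words m M n, cylLen θ w ≤ θ * (1 - m / ((M : ℝ) + 1)) ^ n := by
  induction n with
  | zero => simp [words, cylLen, branch, abs_of_pos hθ]
  | succ n ih =>
    have hc : 0 ≤ 1 - m / ((M : ℝ) + 1) :=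
      sub_nonneg.2 ((div_le_one (by positivity)).2 (by exact_mod_cast Nat.le_succ_of_le hmM))
    rw [words, Finset.sum_image fun p _ q _ h => Prod.ext (List.cons.inj h).2 (List.cons.inj h).1,
      Finset.sum_product]
    calc _ ≤ ∑ w ∈ words m M n, (1 - m / ((M : ℝ) + 1)) * cylLen θ w :=
          Finset.sum_le_sum fun w hw =>
            sum_cylLen_cons_le hθ hmθ hmM fun ℓ hℓ => le_of_mem_words hw hℓ
      _ ≤ (1 - m / ((M : ℝ) + 1)) * (θ * (1 - m / ((M : ℝ) + 1)) ^ n) := by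
          rw [← Finset.mul_sum]; gcongr
      _ = θ * (1 - m / ((M : ℝ) + 1)) ^ (n + 1) := by ring

lemma exists_mem_words_eq_branch {m M : ℕ} (hm : 0 < m) {x : ℝ} (hx : x ∈ XMset θ m M)
    (n : ℕ) : ∃ w ∈ words m M n, x = branch θ w ((gaussMap θ)^[n] x) := by
  induction n with
  | zero => exact ⟨[], by simp [words], rfl⟩
  | succ n ih =>
    obtain ⟨w, hw, hxw⟩ := ih
    set t := (gaussMap θ)^[n] x
    have hdig : (m : ℤ) ≤ ⌊1 / (θ * t)⌋ ∧ ⌊1 / (θ * t)⌋ ≤ M := by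
      simpa [digit, t] using hx.2.2 (n + 1) (by omega)
    have ht : t ≠ 0 := by
      rintro h
      rw [h, mul_zero, div_zero, Int.floor_zero] at hdig
      omega
    obtain ⟨ℓ, hℓ⟩ := Int.eq_ofNat_of_zero_le (by omega : (0 : ℤ) ≤ ⌊1 / (θ * t)⌋)
    rw [hℓ] at hdig
    refine ⟨ℓ :: w, mem_words.2 ⟨by simp [(mem_words.1 hw).1], ?_⟩, ?_⟩
    · simp only [List.mem_cons, forall_eq_or_imp]
      exact ⟨Finset.mem_Icc.2 (by omega), (mem_words.1 hw).2⟩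
    · have := eq_one_div_add_gaussMap (θ := θ) ht
      rw [hℓ, Int.cast_natCast] at this
      rwa [Function.iterate_succ_apply', branch, ← this]

lemma XMset_subset_iUnion_cylinder {m M : ℕ} (hθ : 0 < θ) (hm : 0 < m) (n : ℕ) :
    XMset θ m M ⊆ ⋃ w : words m M n, cylinder θ w := by
  intro x hx
  obtain ⟨w, hw, hxw⟩ := exists_mem_words_eq_branch hm hx n
  have hw₀ : ∀ ℓ ∈ w, 0 < ℓ := fun ℓ hℓ => hm.trans_le (le_of_mem_words hw hℓ)
  exact mem_iUnion.2
    ⟨⟨w, hw⟩, hxw ▸ branch_mem_cylinder hθ hw₀ (iterate_gaussMap_mem_Icc hθ hx.1 n)⟩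

lemma sum_words_cylLen_rpow_le {m M : ℕ} (hθ : 0 < θ) (hmθ : θ ^ 2 * m = 1) (hmM : m ≤ M)
    {ε : ℝ} (hε : 0 ≤ ε) (n : ℕ) :
    ∑ w ∈ words m M n, cylLen θ w ^ (1 - ε) ≤
      θ ^ (1 - ε) * ((((M : ℝ) + 1) * (M + 2) / m) ^ ε * (1 - m / ((M : ℝ) + 1))) ^ n := by
  set K := ((M : ℝ) + 1) * (M + 2) / m
  have hm : (0 : ℝ) < m := by exact_mod_cast pos_of_le_of_sq_mul_eq_one hmθ le_rfl
  have hK : 0 < K := by positivity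
  have hb : 0 < θ / K ^ n := by positivity
  have hterm : ∀ w ∈ words m M n, cylLen θ w ^ (1 - ε) ≤ (θ / K ^ n) ^ (-ε) * cylLen θ w := by
    intro w hw
    obtain ⟨hlen, hw⟩ := mem_words.1 hw
    have hlow : θ / K ^ n ≤ cylLen θ w := hlen ▸ div_pow_le_cylLen hθ hmθ hw
    rw [show 1 - ε = -ε + 1 by ring, Real.rpow_add_one (hb.trans_le hlow).ne']
    exact mul_le_mul_of_nonneg_right (Real.rpow_le_rpow_of_nonpos hb hlow (neg_nonpos.2 hε))
      (abs_nonneg _)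
  calc _ ≤ ∑ w ∈ words m M n, (θ / K ^ n) ^ (-ε) * cylLen θ w := Finset.sum_le_sum hterm
    _ ≤ (θ / K ^ n) ^ (-ε) * (θ * (1 - m / ((M : ℝ) + 1)) ^ n) := by
      rw [← Finset.mul_sum]
      gcongr
      exact sum_words_cylLen_le hθ hmθ hmM n
    _ = _ := by
      have hKn : (θ / K ^ n) ^ (-ε) = θ ^ (-ε) * (K ^ ε) ^ n := by
        rw [Real.div_rpow hθ.le (by positivity), Real.rpow_neg (pow_nonneg hK.le n),
          ← Real.rpow_pow_comm hK.le, div_inv_eq_mul]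
      rw [hKn, show 1 - ε = -ε + 1 by ring, Real.rpow_add_one hθ.ne', mul_pow]
      ring

theorem dimH_XMset_le {m M : ℕ} (hθ : 0 < θ) (hmθ : θ ^ 2 * m = 1) (hm : 2 ≤ m) (hmM : m ≤ M)
    {ε : ℝ} (hε : ε ∈ Icc 0 1)
    (hρ : (((M : ℝ) + 1) * (M + 2) / m) ^ ε * (1 - m / ((M : ℝ) + 1)) < 1) :
    dimH (XMset θ m M) ≤ ENNReal.ofReal (1 - ε) := by
  set ρ := (((M : ℝ) + 1) * (M + 2) / m) ^ ε * (1 - m / ((M : ℝ) + 1))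
  have hρ₀ : 0 ≤ ρ := by
    have : (m : ℝ) / (M + 1) ≤ 1 :=
      (div_le_one (by positivity)).2 (by exact_mod_cast Nat.le_succ_of_le hmM)
    exact mul_nonneg (by positivity) (sub_nonneg.2 this)
  have hs : ((1 - ε).toNNReal : ℝ) = 1 - ε := Real.coe_toNNReal _ (sub_nonneg.2 hε.2)
  have hm₁ : (1 : ℝ) < m := by exact_mod_cast hm
  refine dimH_le_of_tendsto_sum_ediam_rpow (fun n (w : words m M n) => cylinder θ w)
    (XMset_subset_iUnion_cylinder hθ (by omega)) (r := fun n => ENNReal.ofReal (θ / m ^ n)) ?_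
    (fun n w => ?_) (d := (1 - ε).toNNReal) ?_
  · rw [← ENNReal.ofReal_zero]
    exact ENNReal.tendsto_ofReal
      (tendsto_const_nhds.div_atTop (tendsto_pow_atTop_atTop_of_one_lt hm₁))
  · obtain ⟨w, hw⟩ := w
    rw [ediam_cylinder]
    have := cylLen_le_div_pow hθ hmθ fun ℓ hℓ => le_of_mem_words hw hℓ
    rw [(mem_words.1 hw).1] at this
    exact ENNReal.ofReal_le_ofReal this
  · have hsum : ∀ n, ∑ w : words m M n, ediam (cylinder θ w) ^ ((1 - ε).toNNReal : ℝ) ≤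
        ENNReal.ofReal (θ ^ (1 - ε) * ρ ^ n) := fun n => by
      rw [hs, Finset.sum_coe_sort (words m M n) fun w => ediam (cylinder θ w) ^ (1 - ε)]
      simp_rw [ediam_cylinder,
        ENNReal.ofReal_rpow_of_nonneg (cylLen_nonneg θ _) (sub_nonneg.2 hε.2)]
      rw [← ENNReal.ofReal_sum_of_nonneg fun w _ => Real.rpow_nonneg (cylLen_nonneg θ w) _]
      exact ENNReal.ofReal_le_ofReal (sum_words_cylLen_rpow_le hθ hmθ hmM hε.1 n)
    have hlim : Tendsto (fun n => θ ^ (1 - ε) * ρ ^ n) atTop (𝓝 0) := by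
      simpa using (tendsto_pow_atTop_nhds_zero_of_lt_one hρ₀ hρ).const_mul (θ ^ (1 - ε))
    refine tendsto_of_tendsto_of_tendsto_of_le_of_le tendsto_const_nhds ?_ (fun _ => bot_le) hsum
    simpa using ENNReal.tendsto_ofReal hlim

lemma sq_mul_eq_one_of_sq_eq_one_div {m : ℕ} (hθ : θ ≠ 0) (h : θ ^ 2 = 1 / m) : θ ^ 2 * m = 1 := by
  have : (m : ℝ) ≠ 0 := fun hm => by simp [hm, hθ] at h
  rw [h, one_div_mul_cancel this]

lemma two_le_of_sq_mul_eq_one {m : ℕ} (hθ : θ ∈ Ioo 0 1) (hmθ : θ ^ 2 * m = 1) : 2 ≤ m := by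
  by_contra! h
  have : (m : ℝ) ≤ 1 := by exact_mod_cast Nat.le_of_lt_succ h
  nlinarith [pow_lt_one₀ hθ.1.le hθ.2 two_ne_zero]

end ThetaExpansion

theorem XM_dimH_upper_bound_general (θ : ℝ) (m : ℕ)
    (hθ : θ ∈ Set.Ioo (0 : ℝ) 1) (hθ2 : θ ^ 2 = 1 / m)
    (M : ℕ) (hM : 2 * m + 1 < M) :
    dimH (XMset θ m M) ≤
      ENNReal.ofReal
        (1 - (m : ℝ) / ((M : ℝ) + 2) *
          (1 / Real.log (2 * (M : ℝ) * ((M : ℝ) + 1) / (m : ℝ)))) := by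
  have hmθ := ThetaExpansion.sq_mul_eq_one_of_sq_eq_one_div hθ.1.ne' hθ2
  have hm := ThetaExpansion.two_le_of_sq_mul_eq_one hθ hmθ
  have hm₀ : (0 : ℝ) < m := by exact_mod_cast (by omega : 0 < m)
  have hM' : 2 * (m : ℝ) + 2 ≤ M := by exact_mod_cast hM
  have hM₀ : (0 : ℝ) < M := by linarith
  set L := Real.log (2 * (M : ℝ) * ((M : ℝ) + 1) / (m : ℝ))
  have hL : 1 ≤ L := by
    rw [Real.le_log_iff_exp_le (by positivity), le_div_iff₀ hm₀]
    nlinarith [Real.exp_one_lt_d9]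
  have hKL : Real.log (((M : ℝ) + 1) * (M + 2) / m) ≤ L :=
    Real.log_le_log (by positivity) (div_le_div_of_nonneg_right (by nlinarith) hm₀.le)
  have hε : (m : ℝ) / (M + 2) * (1 / L) ≤ m / (M + 2) :=
    mul_le_of_le_one_right (by positivity) ((div_le_one (by positivity)).2 hL)
  have hmM : (m : ℝ) / (M + 2) < 1 := (div_lt_one (by positivity)).2 (by linarith)
  refine ThetaExpansion.dimH_XMset_le hθ.1 hmθ hm (by omega) ⟨by positivity, by linarith⟩
    (Real.rpow_mul_one_sub_lt_one (by positivity) ((div_lt_one (by positivity)).2 (by linarith)) ?_)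
  calc _ ≤ (m : ℝ) / (M + 2) * (1 / L) * L := by gcongr
    _ = m / (M + 2) := by field_simp
    _ < m / (M + 1) := by gcongr; linarith

/-- upper bound `dim_H(X_M) ≤ 1 − (m/(M+2))·(1/log(2M(M+1)/m))`. -/
theorem XM_dimH_upper_bound (θ : ℝ) (m : ℕ) (hm : 0 < m) (hmns : ¬ IsSquare m)
    (hθ : θ ∈ Set.Ioo (0 : ℝ) 1) (hθirr : Irrational θ) (hθ2 : θ ^ 2 = 1 / m)
    (M : ℕ) (hM : 2 * m + 1 < M) :
    dimH (XMset θ m M) ≤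
      ENNReal.ofReal
        (1 - (m : ℝ) / ((M : ℝ) + 2) *
          (1 / Real.log (2 * (M : ℝ) * ((M : ℝ) + 1) / (m : ℝ)))) :=
  XM_dimH_upper_bound_general θ m hθ hθ2 M hM
end
end

section
/- The sequence n_k = ⌊exp(k^{3/4})⌋ satisfies lim_{k→∞} (log n_{k+1}·log log n_{k+1} − log n_k·log log n_k) = 0. -/
open Filter Real

noncomputable section

/-- The sparse sequence `n_k = ⌊exp(k^{3/4})⌋`. -/
def sparseSeq (k : ℕ) : ℕ := ⌊Real.exp ((k : ℝ) ^ ((3 : ℝ) / 4))⌋₊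

/-!
Write `f t = t log t`, `x_k = k^{3/4}` and `L_k = log n_k`. The difference splits as
`(f L_{k+1} - f x_{k+1}) + (f x_{k+1} - f x_k) + (f x_k - f L_k)`. On `[1, ∞)` the function `f` is
increasing with `f' = log + 1`, so `0 ≤ f v - f u ≤ (v - u) (log v + 1)` for `1 ≤ u ≤ v`. In both
kinds of differences the gap is polynomially small in `u`: flooring changes the logarithm by at most
`1 / n_k ≤ 1 / L_k`, and `x_{k+1} - x_k ≤ k^{-1/4} = x_k^{-1/3}`. A polynomial gain beats the
logarithmic factor.
-/

open Topology

namespace Real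

lemma mul_log_le_mul_log {a b : ℝ} (ha : 1 ≤ a) (hab : a ≤ b) : a * log a ≤ b * log b :=
  mul_le_mul hab (log_le_log (by linarith) hab) (log_nonneg ha) (by linarith)

lemma mul_log_sub_mul_log_le {a b : ℝ} (ha : 0 < a) (hab : a ≤ b) :
    b * log b - a * log a ≤ (b - a) * (log b + 1) := by
  have hlog : a * (log b - log a) ≤ b - a :=
    calc a * (log b - log a) = a * log (b / a) := by rw [log_div (by linarith) ha.ne']
      _ ≤ a * (b / a - 1) := by gcongr; exact log_le_sub_one_of_pos (div_pos (by linarith) ha)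
      _ = b - a := by field_simp
  linarith

lemma tendsto_rpow_neg_mul_log_add_atTop {r : ℝ} (hr : 0 < r) (c : ℝ) :
    Tendsto (fun t : ℝ => t ^ (-r) * (log t + c)) atTop (𝓝 0) := by
  have hlog : Tendsto (fun t : ℝ => t ^ (-r) * log t) atTop (𝓝 0) :=
    (isLittleO_log_rpow_atTop hr).tendsto_div_nhds_zero.congr' <|
      (eventually_gt_atTop 0).mono fun t ht => by dsimp only; rw [rpow_neg ht.le, div_eq_inv_mul]
  have hpow : Tendsto (fun t : ℝ => t ^ (-r)) atTop (𝓝 0) := tendsto_rpow_neg_atTop hr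
  simpa [mul_add] using hlog.add (hpow.mul_const c)

lemma add_one_rpow_sub_rpow_le {a p : ℝ} (ha : 0 < a) (hp : p ≤ 1) :
    (a + 1) ^ p - a ^ p ≤ a ^ (p - 1) := by
  have ha1 : 0 < a + 1 := by linarith
  have hdecr : (a + 1) ^ (p - 1) ≤ a ^ (p - 1) :=
    rpow_le_rpow_of_nonpos ha (by linarith) (by linarith)
  calc (a + 1) ^ p - a ^ p = (a + 1) * (a + 1) ^ (p - 1) - a * a ^ (p - 1) := by
        rw [rpow_sub_one ha1.ne', rpow_sub_one ha.ne', mul_div_cancel₀ _ ha1.ne',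
          mul_div_cancel₀ _ ha.ne']
    _ ≤ (a + 1) * a ^ (p - 1) - a * a ^ (p - 1) := by gcongr
    _ = a ^ (p - 1) := by ring

lemma log_le_log_natFloor_add_inv {y : ℝ} (hy : 1 ≤ y) :
    log y ≤ log ⌊y⌋₊ + (⌊y⌋₊ : ℝ)⁻¹ := by
  have hn : (1 : ℝ) ≤ ⌊y⌋₊ := by exact_mod_cast (Nat.one_le_floor_iff y).mpr hy
  have hn0 : (0 : ℝ) < ⌊y⌋₊ := by linarith
  calc log y = log ⌊y⌋₊ + log (y / ⌊y⌋₊) := by rw [log_div (by linarith) hn0.ne']; ring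
    _ ≤ log ⌊y⌋₊ + (y / ⌊y⌋₊ - 1) := by gcongr; exact log_le_sub_one_of_pos (by positivity)
    _ = log ⌊y⌋₊ + (y - ⌊y⌋₊) / ⌊y⌋₊ := by field_simp
    _ ≤ log ⌊y⌋₊ + 1 / ⌊y⌋₊ := by gcongr; linarith [Nat.lt_floor_add_one y]
    _ = log ⌊y⌋₊ + (⌊y⌋₊ : ℝ)⁻¹ := by rw [one_div]

end Real

theorem tendsto_mul_log_sub_mul_log_of_le_add_rpow {α : Type*} {l : Filter α} {u v : α → ℝ}
    {r : ℝ} (hr : 0 < r) (hu : Tendsto u l atTop) (huv : ∀ᶠ i in l, u i ≤ v i)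
    (hvu : ∀ᶠ i in l, v i ≤ u i + u i ^ (-r)) :
    Tendsto (fun i => v i * log (v i) - u i * log (u i)) l (𝓝 0) := by
  refine squeeze_zero' ?_ ?_ ((tendsto_rpow_neg_mul_log_add_atTop hr 2).comp hu)
  · filter_upwards [hu.eventually_ge_atTop 1, huv] with i hu1 huv
    exact sub_nonneg.mpr (mul_log_le_mul_log hu1 huv)
  filter_upwards [hu.eventually_ge_atTop 1, huv, hvu] with i hu1 huv hvu
  have hgap : u i ^ (-r) ≤ 1 := rpow_le_one_of_one_le_of_nonpos hu1 (by linarith)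
  have hlogv : log (v i) + 1 ≤ log (u i) + 2 :=
    calc log (v i) + 1 ≤ log (2 * u i) + 1 := by gcongr <;> linarith
      _ = log (u i) + (log 2 + 1) := by rw [log_mul two_ne_zero (by linarith)]; ring
      _ ≤ log (u i) + 2 := by linarith [log_two_lt_d9]
  calc v i * log (v i) - u i * log (u i) ≤ (v i - u i) * (log (v i) + 1) :=
        mul_log_sub_mul_log_le (by linarith) huv
    _ ≤ u i ^ (-r) * (log (u i) + 2) := by
        gcongr
        · linarith [log_nonneg (show 1 ≤ v i by linarith)]
        · linarith

theorem tendsto_mul_log_sub_log_natFloor_exp_mul_log_log :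
    Tendsto (fun x : ℝ => x * log x - log ⌊exp x⌋₊ * log (log ⌊exp x⌋₊)) atTop (𝓝 0) := by
  have hn : ∀ x : ℝ, 0 ≤ x → (1 : ℝ) ≤ ⌊exp x⌋₊ := fun x hx => by
    exact_mod_cast (Nat.one_le_floor_iff _).mpr (one_le_exp hx)
  have hfloor : ∀ x : ℝ, 0 ≤ x → x ≤ log ⌊exp x⌋₊ + (⌊exp x⌋₊ : ℝ)⁻¹ := fun x hx => by
    simpa using log_le_log_natFloor_add_inv (one_le_exp hx)
  have hlower : ∀ x : ℝ, 0 ≤ x → x - 1 ≤ log ⌊exp x⌋₊ := fun x hx => by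
    linarith [hfloor x hx, inv_le_one_of_one_le₀ (hn x hx)]
  have hu : Tendsto (fun x : ℝ => log ⌊exp x⌋₊) atTop atTop :=
    tendsto_atTop_mono' _ ((eventually_ge_atTop 0).mono hlower)
      (tendsto_atTop_add_const_right _ (-1) tendsto_id)
  refine tendsto_mul_log_sub_mul_log_of_le_add_rpow one_pos hu ?_ ?_
  · filter_upwards [eventually_ge_atTop 0] with x hx
    simpa using log_le_log (by linarith [hn x hx]) (Nat.floor_le (exp_pos x).le)
  filter_upwards [eventually_ge_atTop 2] with x hx
  have hlog_le : log ⌊exp x⌋₊ ≤ ⌊exp x⌋₊ := log_le_self (Nat.cast_nonneg _)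
  rw [rpow_neg_one]
  linarith [hfloor x (by linarith), inv_anti₀ (by linarith [hlower x (by linarith)]) hlog_le]

theorem tendsto_natCast_add_one_rpow_mul_log_sub {p : ℝ} (hp₀ : 0 < p) (hp₁ : p < 1) :
    Tendsto (fun k : ℕ => ((k + 1 : ℕ) : ℝ) ^ p * log (((k + 1 : ℕ) : ℝ) ^ p) -
      (k : ℝ) ^ p * log ((k : ℝ) ^ p)) atTop (𝓝 0) := by
  refine tendsto_mul_log_sub_mul_log_of_le_add_rpow (r := (1 - p) / p) (by field_simp; linarith)
    ((tendsto_rpow_atTop hp₀).comp tendsto_natCast_atTop_atTop) ?_ ?_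
  · filter_upwards with k
    gcongr
    simp
  filter_upwards [eventually_gt_atTop 0] with k hk
  have hk' : (0 : ℝ) < k := by exact_mod_cast hk
  rw [← rpow_mul hk'.le, show p * -((1 - p) / p) = p - 1 by field_simp; ring, Nat.cast_succ]
  linarith [add_one_rpow_sub_rpow_le hk' hp₁.le]

/-- `log n_{k+1}·log log n_{k+1} − log n_k·log log n_k → 0`. -/
theorem sparseSeq_loglog_gap_small :
    Tendsto
      (fun k : ℕ =>
        Real.log (sparseSeq (k + 1)) * Real.log (Real.log (sparseSeq (k + 1))) -
          Real.log (sparseSeq k) * Real.log (Real.log (sparseSeq k)))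
      atTop (nhds 0) := by
  have hx : Tendsto (fun k : ℕ => (k : ℝ) ^ ((3 : ℝ) / 4)) atTop atTop :=
    (tendsto_rpow_atTop (by norm_num)).comp tendsto_natCast_atTop_atTop
  have hfloor := tendsto_mul_log_sub_log_natFloor_exp_mul_log_log.comp hx
  have hstep := tendsto_natCast_add_one_rpow_mul_log_sub (p := 3 / 4) (by norm_num) (by norm_num)
  have hsum := ((hfloor.comp (tendsto_add_atTop_nat 1)).neg.add hstep).add hfloor
  simp only [neg_zero, add_zero] at hsum
  refine hsum.congr fun k => ?_
  simp only [Function.comp_apply, sparseSeq]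
  ring
end
end

section
/- For any real α > 0, any positive integer m, and any integer M > 2m+1, there exists N_0 such that for all k ≥ N_0 the following three conditions hold simultaneously: (A) α·m·(n_k − 1)/(log n_k·log log n_k) > M + 1; (B) log n_{k+1}·log log n_{k+1} − log n_k·log log n_k < α/2; (C) n_{k+1} − n_k < n_k/k^{1/8}. -/
/-!
Write `t = k^{1/8}`, so that `n_k = ⌊exp t^6⌋`. Since `log x - log ⌊x⌋ ≤ 1/(x - 1)`, `log n_k`
is within `t^{-2}/4` of `t^6`, while `(k+1)^{3/4} - k^{3/4} ≤ (3/4) t^{-2}`; hence consecutive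
values of `L_k = log n_k` differ by at most `t^{-2}`. The map `L ↦ L log L` has slope
`log L + 1 = O(t)` on this range, which gives (B) with the bound `7/t`, and
`n_{k+1} / n_k - 1 = O(t^{-2})` gives (C). Condition (A) only uses `x / (log x log log x) → ∞`.
-/

open Filter Real

noncomputable section

theorem add_one_rpow_le {x p : ℝ} (hx : 0 < x) (hp₀ : 0 ≤ p) (hp₁ : p ≤ 1) :
    (x + 1) ^ p ≤ x ^ p + p * x ^ (p - 1) := by
  have hbern := rpow_one_add_le_one_add_mul_self (s := x⁻¹) (by linarith [inv_pos.2 hx]) hp₀ hp₁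
  calc (x + 1) ^ p = x ^ p * (1 + x⁻¹) ^ p := by
        rw [← mul_rpow hx.le (by positivity), mul_add, mul_one, mul_inv_cancel₀ hx.ne']
    _ ≤ x ^ p * (1 + p * x⁻¹) := by gcongr
    _ = x ^ p + p * x ^ (p - 1) := by rw [rpow_sub_one hx.ne']; ring

theorem log_sub_log_natFloor_le {x : ℝ} (hx : 1 < x) : log x - log ⌊x⌋₊ ≤ (x - 1)⁻¹ := by
  have hlt : x - 1 < ⌊x⌋₊ := Nat.sub_one_lt_floor x
  have hpos : (0 : ℝ) < ⌊x⌋₊ := by linarith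
  calc log x - log ⌊x⌋₊ = log (x / ⌊x⌋₊) := (log_div (by positivity) hpos.ne').symm
    _ ≤ x / ⌊x⌋₊ - 1 := log_le_sub_one_of_pos (by positivity)
    _ = (x - ⌊x⌋₊) / ⌊x⌋₊ := by field_simp
    _ ≤ 1 / ⌊x⌋₊ := by gcongr; linarith
    _ ≤ (x - 1)⁻¹ := by rw [one_div]; gcongr

theorem mul_log_sub_mul_log_le {x y : ℝ} (hx : 0 < x) (hy : 0 < y) :
    y * log y - x * log x ≤ (y - x) * (log y + 1) := by
  have h : x * log (y / x) ≤ y - x := by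
    calc x * log (y / x) ≤ x * (y / x - 1) := by gcongr; exact log_le_sub_one_of_pos (by positivity)
      _ = y - x := by field_simp
  rw [log_div hy.ne' hx.ne'] at h
  nlinarith

theorem tendsto_sub_one_div_log_mul_log_log_atTop :
    Tendsto (fun x : ℝ => (x - 1) / (log x * log (log x))) atTop atTop := by
  have hsq : Tendsto (fun x : ℝ => (x - 1) / log x ^ 2) atTop atTop := by
    have h := tendsto_pow_log_div_mul_add_atTop 1 (-1) 2 one_ne_zero
    have hpos : ∀ᶠ x : ℝ in atTop, 0 < log x ^ 2 / (1 * x + -1) := by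
      filter_upwards [eventually_gt_atTop 1] with x hx
      have hlog : 0 < log x := log_pos hx
      have hden : 0 < 1 * x + -1 := by linarith
      positivity
    refine (tendsto_nhdsWithin_iff.2 ⟨h, hpos⟩).inv_tendsto_nhdsGT_zero.congr fun x => ?_
    simp only [Pi.inv_apply, inv_div, one_mul, ← sub_eq_add_neg]
  refine tendsto_atTop_mono' atTop ?_ hsq
  filter_upwards [eventually_gt_atTop (exp 1)] with x hx
  have hlog : 1 < log x := (lt_log_iff_exp_lt ((exp_pos 1).trans hx)).2 hx
  have hloglog : 0 < log (log x) := log_pos hlog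
  have hx1 : 0 ≤ x - 1 := by linarith [add_one_le_exp 1]
  have hle : log (log x) ≤ log x := by linarith [log_le_sub_one_of_pos (zero_lt_one.trans hlog)]
  rw [sq]
  exact div_le_div_of_nonneg_left hx1 (by positivity) (mul_le_mul_of_nonneg_left hle (by linarith))

theorem tendsto_natCast_rpow_atTop {p : ℝ} (hp : 0 < p) :
    Tendsto (fun k : ℕ => (k : ℝ) ^ p) atTop atTop :=
  (tendsto_rpow_atTop hp).comp tendsto_natCast_atTop_atTop

theorem rpow_three_fourths_eq_pow {x : ℝ} (hx : 0 ≤ x) :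
    x ^ ((3 : ℝ) / 4) = (x ^ ((1 : ℝ) / 8)) ^ 6 := by
  rw [← rpow_natCast, ← rpow_mul hx]; norm_num

theorem add_one_rpow_three_fourths_le {x : ℝ} (hx : 0 < x) :
    (x + 1) ^ ((3 : ℝ) / 4) ≤ (x ^ ((1 : ℝ) / 8)) ^ 6 + 3 / 4 / (x ^ ((1 : ℝ) / 8)) ^ 2 := by
  have h := add_one_rpow_le hx (p := 3 / 4) (by norm_num) (by norm_num)
  have hpow : x ^ ((3 : ℝ) / 4 - 1) = ((x ^ ((1 : ℝ) / 8)) ^ 2)⁻¹ := by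
    rw [← rpow_natCast, ← rpow_mul hx.le, ← rpow_neg hx.le]; norm_num
  rwa [rpow_three_fourths_eq_pow hx.le, hpow, ← div_eq_mul_inv] at h

theorem sparseSeq_mono : Monotone sparseSeq := fun _ _ h =>
  Nat.floor_mono <| exp_le_exp.2 <| rpow_le_rpow (Nat.cast_nonneg _) (Nat.cast_le.2 h) (by norm_num)

theorem one_le_sparseSeq (k : ℕ) : 1 ≤ sparseSeq k :=
  Nat.le_floor <| by simpa using one_le_exp (by positivity)

theorem tendsto_sparseSeq_atTop : Tendsto (fun k => (sparseSeq k : ℝ)) atTop atTop :=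
  tendsto_natCast_atTop_atTop.comp <| tendsto_nat_floor_atTop.comp <|
    tendsto_exp_atTop.comp <| tendsto_natCast_rpow_atTop (by norm_num)

theorem log_sparseSeq_le (k : ℕ) : log (sparseSeq k) ≤ (k : ℝ) ^ ((3 : ℝ) / 4) := by
  calc log (sparseSeq k) ≤ log (exp ((k : ℝ) ^ ((3 : ℝ) / 4))) :=
        log_le_log (by exact_mod_cast one_le_sparseSeq k) (Nat.floor_le (exp_pos _).le)
    _ = _ := log_exp _

theorem rpow_three_fourths_sub_log_sparseSeq_le {k : ℕ} (hk : 0 < k) :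
    (k : ℝ) ^ ((3 : ℝ) / 4) - log (sparseSeq k) ≤ (exp ((k : ℝ) ^ ((3 : ℝ) / 4)) - 1)⁻¹ := by
  have h := log_sub_log_natFloor_le (one_lt_exp_iff.2 (by positivity : 0 < (k : ℝ) ^ ((3 : ℝ) / 4)))
  rwa [log_exp] at h

section LargeIndex

variable {k : ℕ}

theorem pos_of_two_le_rpow (ht : 2 ≤ (k : ℝ) ^ ((1 : ℝ) / 8)) : 0 < k :=
  Nat.pos_of_ne_zero <| by rintro rfl; norm_num at ht

theorem le_log_sparseSeq (ht : 2 ≤ (k : ℝ) ^ ((1 : ℝ) / 8)) :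
    ((k : ℝ) ^ ((1 : ℝ) / 8)) ^ 6 - 1 / 4 / ((k : ℝ) ^ ((1 : ℝ) / 8)) ^ 2 ≤ log (sparseSeq k) := by
  have h := rpow_three_fourths_sub_log_sparseSeq_le (pos_of_two_le_rpow ht)
  rw [rpow_three_fourths_eq_pow (Nat.cast_nonneg k)] at h
  set t := (k : ℝ) ^ ((1 : ℝ) / 8)
  have hexp : 4 * t ^ 2 ≤ exp (t ^ 6) - 1 := by
    nlinarith [add_one_le_exp (t ^ 6), pow_le_pow_left₀ zero_le_two ht 4]
  have hinv : (exp (t ^ 6) - 1)⁻¹ ≤ 1 / 4 / t ^ 2 := by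
    rw [div_div, one_div]; exact inv_anti₀ (by positivity) hexp
  linarith

theorem one_lt_log_sparseSeq (ht : 2 ≤ (k : ℝ) ^ ((1 : ℝ) / 8)) : 1 < log (sparseSeq k) := by
  have hlow := le_log_sparseSeq ht
  set t := (k : ℝ) ^ ((1 : ℝ) / 8)
  have hsmall : 1 / 4 / t ^ 2 ≤ 1 := by rw [div_le_one (by positivity)]; nlinarith
  nlinarith [pow_le_pow_left₀ zero_le_two ht 6]

theorem log_sparseSeq_le_log_sparseSeq_succ (k : ℕ) :
    log (sparseSeq k) ≤ log (sparseSeq (k + 1)) :=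
  log_le_log (by exact_mod_cast one_le_sparseSeq k) (by exact_mod_cast sparseSeq_mono k.le_succ)

theorem log_sparseSeq_succ_le (ht : 2 ≤ (k : ℝ) ^ ((1 : ℝ) / 8)) :
    log (sparseSeq (k + 1)) ≤
      ((k : ℝ) ^ ((1 : ℝ) / 8)) ^ 6 + 3 / 4 / ((k : ℝ) ^ ((1 : ℝ) / 8)) ^ 2 :=
  (log_sparseSeq_le (k + 1)).trans <| by
    push_cast; exact add_one_rpow_three_fourths_le (Nat.cast_pos.2 (pos_of_two_le_rpow ht))

theorem log_sparseSeq_succ_sub_le (ht : 2 ≤ (k : ℝ) ^ ((1 : ℝ) / 8)) :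
    log (sparseSeq (k + 1)) - log (sparseSeq k) ≤ 1 / ((k : ℝ) ^ ((1 : ℝ) / 8)) ^ 2 := by
  have hup := log_sparseSeq_succ_le ht
  have hlow := le_log_sparseSeq ht
  set t := (k : ℝ) ^ ((1 : ℝ) / 8)
  have hsum : 3 / 4 / t ^ 2 + 1 / 4 / t ^ 2 = 1 / t ^ 2 := by ring
  linarith

theorem log_log_sparseSeq_succ_le (ht : 2 ≤ (k : ℝ) ^ ((1 : ℝ) / 8)) :
    log (log (sparseSeq (k + 1))) ≤ 6 * (k : ℝ) ^ ((1 : ℝ) / 8) := by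
  have hup := log_sparseSeq_succ_le ht
  have hpos := (one_lt_log_sparseSeq ht).trans_le (log_sparseSeq_le_log_sparseSeq_succ k)
  set t := (k : ℝ) ^ ((1 : ℝ) / 8)
  have ht0 : 0 < t := by linarith
  have hsmall : 3 / 4 / t ^ 2 ≤ 1 := by rw [div_le_one (by positivity)]; nlinarith
  have hbinom : t ^ 6 + 1 ≤ (t + 1) ^ 6 := by
    nlinarith [pow_pos ht0 5, pow_pos ht0 4, pow_pos ht0 3, pow_pos ht0 2]
  calc log (log (sparseSeq (k + 1))) ≤ log ((t + 1) ^ 6) := log_le_log (by linarith) (by linarith)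
    _ = 6 * log (t + 1) := by rw [log_pow]; norm_num
    _ ≤ 6 * t := by linarith [log_le_sub_one_of_pos (by positivity : 0 < t + 1)]

theorem log_mul_log_log_sparseSeq_succ_sub_le (ht : 2 ≤ (k : ℝ) ^ ((1 : ℝ) / 8)) :
    log (sparseSeq (k + 1)) * log (log (sparseSeq (k + 1))) -
        log (sparseSeq k) * log (log (sparseSeq k)) ≤ 7 / (k : ℝ) ^ ((1 : ℝ) / 8) := by
  have hL := one_lt_log_sparseSeq ht
  have hL' := hL.trans_le (log_sparseSeq_le_log_sparseSeq_succ k)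
  have hdiff := log_sparseSeq_succ_sub_le ht
  have hloglog := log_log_sparseSeq_succ_le ht
  set t := (k : ℝ) ^ ((1 : ℝ) / 8)
  calc _ ≤ (log (sparseSeq (k + 1)) - log (sparseSeq k)) * (log (log (sparseSeq (k + 1))) + 1) :=
        mul_log_sub_mul_log_le (by linarith) (by linarith)
    _ ≤ 1 / t ^ 2 * (6 * t + 1) :=
        mul_le_mul hdiff (by linarith) (by linarith [log_pos hL']) (by positivity)
    _ ≤ 7 / t := by
        rw [div_mul_eq_mul_div, div_le_div_iff₀ (by positivity) (by linarith)]; nlinarith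

theorem sparseSeq_succ_sub_lt (ht : 2 ≤ (k : ℝ) ^ ((1 : ℝ) / 8)) :
    (sparseSeq (k + 1) : ℝ) - sparseSeq k < sparseSeq k / (k : ℝ) ^ ((1 : ℝ) / 8) := by
  have hstep := add_one_rpow_three_fourths_le (Nat.cast_pos.2 (pos_of_two_le_rpow ht))
  have hnext : (sparseSeq (k + 1) : ℝ) ≤ exp (((k : ℝ) + 1) ^ ((3 : ℝ) / 4)) := by
    unfold sparseSeq; push_cast; exact Nat.floor_le (exp_pos _).le
  have hcur : exp ((k : ℝ) ^ ((3 : ℝ) / 4)) - 1 < sparseSeq k := Nat.sub_one_lt_floor _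
  rw [rpow_three_fourths_eq_pow (Nat.cast_nonneg k)] at hcur
  set t := (k : ℝ) ^ ((1 : ℝ) / 8)
  set a := 3 / 4 / t ^ 2
  have ha : a ≤ 1 := by rw [div_le_one (by positivity)]; nlinarith
  have hexp_a : exp a ≤ 1 + 2 * a := by
    have ha0 : 0 ≤ a := by positivity
    have h := abs_exp_sub_one_le (x := a) (by rwa [abs_of_nonneg ha0])
    rw [abs_of_nonneg ha0] at h
    linarith [le_abs_self (exp a - 1)]
  have hE' : exp (((k : ℝ) + 1) ^ ((3 : ℝ) / 4)) ≤ exp (t ^ 6) * (1 + 2 * a) := by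
    calc _ ≤ exp (t ^ 6 + a) := exp_le_exp.2 hstep
      _ = exp (t ^ 6) * exp a := exp_add _ _
      _ ≤ _ := by gcongr
  have hE := add_one_le_exp (t ^ 6)
  calc (sparseSeq (k + 1) : ℝ) - sparseSeq k < exp (t ^ 6) * (1 + 2 * a) - (exp (t ^ 6) - 1) := by
        linarith
    _ ≤ (exp (t ^ 6) - 1) / t := by
        have hat : a * t ≤ 3 / 8 := by
          rw [div_mul_eq_mul_div, div_le_div_iff₀ (by positivity) (by norm_num)]; nlinarith
        have ht6 : 4 * (t + 1) ≤ t ^ 6 := by nlinarith [pow_le_pow_left₀ zero_le_two ht 5]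
        rw [le_div_iff₀ (by linarith)]
        nlinarith [mul_le_mul_of_nonneg_left hat (exp_pos (t ^ 6)).le]
    _ ≤ sparseSeq k / t := by gcongr

end LargeIndex

theorem eventually_lt_mul_div_log_mul_log_log_sparseSeq {c : ℝ} (hc : 0 < c) (b : ℝ) :
    ∀ᶠ k in atTop, b < c * ((sparseSeq k : ℝ) - 1) /
      (log (sparseSeq k) * log (log (sparseSeq k))) :=
  (((tendsto_sub_one_div_log_mul_log_log_atTop.comp tendsto_sparseSeq_atTop).const_mul_atTop
    hc).eventually_gt_atTop b).mono fun k hk => by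
      simpa only [Function.comp_apply, mul_div_assoc] using hk

theorem eventually_log_mul_log_log_sparseSeq_succ_sub_lt {ε : ℝ} (hε : 0 < ε) :
    ∀ᶠ k : ℕ in atTop, log (sparseSeq (k + 1)) * log (log (sparseSeq (k + 1))) -
      log (sparseSeq k) * log (log (sparseSeq k)) < ε := by
  filter_upwards [(tendsto_natCast_rpow_atTop (p := 1 / 8) (by norm_num)).eventually_ge_atTop 2,
    (tendsto_natCast_rpow_atTop (p := 1 / 8) (by norm_num)).eventually_gt_atTop (7 / ε)]
    with k ht htε
  refine (log_mul_log_log_sparseSeq_succ_sub_le ht).trans_lt ?_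
  rwa [div_lt_iff₀ (by linarith), mul_comm, ← div_lt_iff₀ hε]

theorem eventually_sparseSeq_succ_sub_lt :
    ∀ᶠ k : ℕ in atTop, (sparseSeq (k + 1) : ℝ) - sparseSeq k <
      sparseSeq k / (k : ℝ) ^ ((1 : ℝ) / 8) :=
  ((tendsto_natCast_rpow_atTop (by norm_num)).eventually_ge_atTop 2).mono
    fun _ ht => sparseSeq_succ_sub_lt ht

theorem sparseSeq_conditions_eventually_general (α : ℝ) (hα : 0 < α) (m : ℕ) (hm : 0 < m)
    (M : ℤ) :
    ∃ N0 : ℕ, ∀ k : ℕ, N0 ≤ k →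
      (α * m * ((sparseSeq k : ℝ) - 1) /
          (Real.log (sparseSeq k) * Real.log (Real.log (sparseSeq k))) > (M : ℝ) + 1) ∧
      (Real.log (sparseSeq (k + 1)) * Real.log (Real.log (sparseSeq (k + 1))) -
          Real.log (sparseSeq k) * Real.log (Real.log (sparseSeq k)) < α / 2) ∧
      ((sparseSeq (k + 1) : ℝ) - (sparseSeq k : ℝ) <
          (sparseSeq k : ℝ) / (k : ℝ) ^ ((1 : ℝ) / 8)) :=
  eventually_atTop.1 <|
    (eventually_lt_mul_div_log_mul_log_log_sparseSeq (mul_pos hα (Nat.cast_pos.2 hm)) _).and <|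
      (eventually_log_mul_log_log_sparseSeq_succ_sub_lt (half_pos hα)).and
        eventually_sparseSeq_succ_sub_lt

/-- for any `α > 0`, positive `m` and integer `M > 2m+1`, the three
technical conditions (A), (B), (C) hold simultaneously for all large `k`. -/
theorem sparseSeq_conditions_eventually (α : ℝ) (hα : 0 < α) (m : ℕ) (hm : 0 < m)
    (M : ℤ) (hM : 2 * (m : ℤ) + 1 < M) :
    ∃ N0 : ℕ, ∀ k : ℕ, N0 ≤ k →
      (α * m * ((sparseSeq k : ℝ) - 1) /
          (Real.log (sparseSeq k) * Real.log (Real.log (sparseSeq k))) > (M : ℝ) + 1) ∧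
      (Real.log (sparseSeq (k + 1)) * Real.log (Real.log (sparseSeq (k + 1))) -
          Real.log (sparseSeq k) * Real.log (Real.log (sparseSeq k)) < α / 2) ∧
      ((sparseSeq (k + 1) : ℝ) - (sparseSeq k : ℝ) <
          (sparseSeq k : ℝ) / (k : ℝ) ^ ((1 : ℝ) / 8)) :=
  sparseSeq_conditions_eventually_general α hα m hm M
end
end

section
/- For any integers ℓ_1, …, ℓ_n with ℓ_i ≥ m, the denominators satisfy Q_{n−1} ≤ θ·Q_n; moreover, for any digit d ≥ m, the gap between the adjacent subcylinders I_{n+1}(ℓ_1,…,ℓ_n,d) and I_{n+1}(ℓ_1,…,ℓ_n,d+1) equals Δ_d = θ/((Q_n·d·θ + Q_{n−1})·(Q_n·(d+1)·θ + Q_{n−1})) and satisfies Δ_d ≥ 1/(θ·Q_n²·(d+1)·(d+2)). -/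
/-! The recursions give `P_{k+1} Q_k − P_k Q_{k+1} = (−1)^k`, so adjacent endpoints
`(P_n x θ + P_{n−1}) / (Q_n x θ + Q_{n−1})` at `x = d` and `x = d + 1` differ by exactly
`±θ / (A B)`, with `A, B` the two denominators. The digit condition `ℓ_i ≥ m = 1/θ²` makes
`ℓ_i θ² ≥ 1`, whence `Q_{n−1} ≤ θ Q_n`; this bounds `A ≤ θ Q_n (d+1)` and
`B ≤ θ Q_n (d+2)`, which is the lower bound on the gap. -/

open Filter Real

noncomputable section

/-- The numerators `P_k` of the θ-expansion convergents:
`P_0 = 0`, `P_1 = 1` (from `P_{-1} = 1`), `P_k = ℓ_k·θ·P_{k-1} + P_{k-2}`. -/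
def Pnum (θ : ℝ) (ℓ : ℕ → ℤ) : ℕ → ℝ
  | 0 => 0
  | 1 => 1
  | (n + 2) => (ℓ (n + 2) : ℝ) * θ * Pnum θ ℓ (n + 1) + Pnum θ ℓ n

/-- The endpoint `(P_n·d·θ + P_{n−1}) / (Q_n·d·θ + Q_{n−1})` of the subcylinder
`I_{n+1}(ℓ_1,…,ℓ_n,d)`. -/
def cylEndpoint (θ : ℝ) (ℓ : ℕ → ℤ) (n : ℕ) (d : ℤ) : ℝ :=
  (Pnum θ ℓ n * (d : ℝ) * θ + Pnum θ ℓ (n - 1)) /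
    (Qden θ ℓ n * (d : ℝ) * θ + Qden θ ℓ (n - 1))

section Convergents

variable {θ : ℝ} {ℓ : ℕ → ℤ}

theorem Qden_pos (hθ : 0 < θ) :
    ∀ {k : ℕ}, (∀ i, 1 ≤ i → i ≤ k → (0 : ℝ) < ℓ i) → 0 < Qden θ ℓ k
  | 0, _ => one_pos
  | 1, hℓ => mul_pos (hℓ 1 le_rfl le_rfl) hθ
  | k + 2, hℓ => by
    have hQ₁ : 0 < Qden θ ℓ (k + 1) := Qden_pos hθ fun i h₁ h₂ => hℓ i h₁ (by omega)
    have hQ₀ : 0 < Qden θ ℓ k := Qden_pos hθ fun i h₁ h₂ => hℓ i h₁ (by omega)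
    have hℓk : (0 : ℝ) < ℓ (k + 2) := hℓ (k + 2) (by omega) le_rfl
    simp only [Qden]
    positivity

theorem Qden_pos_of_one_le_mul_sq (hθ : 0 < θ) {k : ℕ}
    (hℓ : ∀ i, 1 ≤ i → i ≤ k → 1 ≤ (ℓ i : ℝ) * θ ^ 2) : 0 < Qden θ ℓ k :=
  Qden_pos hθ fun i h₁ h₂ => pos_of_mul_pos_left (one_pos.trans_le (hℓ i h₁ h₂)) (sq_nonneg θ)

theorem Qden_le_mul_Qden_succ (hθ : 0 < θ) {k : ℕ}
    (hℓ : ∀ i, 1 ≤ i → i ≤ k + 1 → 1 ≤ (ℓ i : ℝ) * θ ^ 2) :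
    Qden θ ℓ k ≤ θ * Qden θ ℓ (k + 1) := by
  rcases k with _ | k
  · have h₁ := hℓ 1 le_rfl le_rfl
    simp only [Qden]
    linarith
  · have hQ₁ : 0 ≤ Qden θ ℓ (k + 1) :=
      (Qden_pos_of_one_le_mul_sq hθ fun i h₁ h₂ => hℓ i h₁ (by omega)).le
    have hQ₀ : 0 ≤ Qden θ ℓ k :=
      (Qden_pos_of_one_le_mul_sq hθ fun i h₁ h₂ => hℓ i h₁ (by omega)).le
    have hℓk := hℓ (k + 2) (by omega) le_rfl
    show Qden θ ℓ (k + 1) ≤ θ * (ℓ (k + 2) * θ * Qden θ ℓ (k + 1) + Qden θ ℓ k)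
    nlinarith [mul_nonneg hθ.le hQ₀]

theorem Pnum_mul_Qden_sub_Pnum_mul_Qden (k : ℕ) :
    Pnum θ ℓ (k + 1) * Qden θ ℓ k - Pnum θ ℓ k * Qden θ ℓ (k + 1) = (-1) ^ k := by
  induction k with
  | zero => simp [Pnum, Qden]
  | succ k ih =>
    simp only [Pnum, Qden]
    linear_combination -ih

theorem cylEndpoint_add_one_sub (k : ℕ) (d : ℤ)
    (hA : Qden θ ℓ (k + 1) * d * θ + Qden θ ℓ k ≠ 0)
    (hB : Qden θ ℓ (k + 1) * (d + 1) * θ + Qden θ ℓ k ≠ 0) :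
    cylEndpoint θ ℓ (k + 1) (d + 1) - cylEndpoint θ ℓ (k + 1) d =
      (-1) ^ k * θ / ((Qden θ ℓ (k + 1) * d * θ + Qden θ ℓ k) *
        (Qden θ ℓ (k + 1) * (d + 1) * θ + Qden θ ℓ k)) := by
  simp only [cylEndpoint, Nat.add_sub_cancel, Int.cast_add, Int.cast_one]
  rw [div_sub_div _ _ hB hA, div_eq_div_iff (mul_ne_zero hB hA) (mul_ne_zero hA hB)]
  linear_combination (θ * ((Qden θ ℓ (k + 1) * d * θ + Qden θ ℓ k) *
    (Qden θ ℓ (k + 1) * (d + 1) * θ + Qden θ ℓ k))) * Pnum_mul_Qden_sub_Pnum_mul_Qden k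

end Convergents

theorem one_div_le_div_mul_of_le_mul {θ Q q x : ℝ} (hθ : 0 < θ) (hQ : 0 ≤ Q)
    (hA : 0 < Q * x * θ + q) (hq : q ≤ θ * Q) :
    1 / (θ * Q ^ 2 * (x + 1) * (x + 2)) ≤
      θ / ((Q * x * θ + q) * (Q * (x + 1) * θ + q)) := by
  have hB : 0 < Q * (x + 1) * θ + q := by nlinarith [mul_nonneg hQ hθ.le]
  have hA_le : Q * x * θ + q ≤ θ * Q * (x + 1) := by linarith
  have hB_le : Q * (x + 1) * θ + q ≤ θ * Q * (x + 2) := by linarith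
  calc 1 / (θ * Q ^ 2 * (x + 1) * (x + 2))
      = θ / ((θ * Q * (x + 1)) * (θ * Q * (x + 2))) := by
        rw [show θ * Q * (x + 1) * (θ * Q * (x + 2)) = θ * (θ * Q ^ 2 * (x + 1) * (x + 2)) by ring,
          div_mul_cancel_left₀ hθ.ne', one_div]
    _ ≤ θ / ((Q * x * θ + q) * (Q * (x + 1) * θ + q)) :=
        div_le_div_of_nonneg_left hθ.le (mul_pos hA hB)
          (mul_le_mul hA_le hB_le hB.le (hA.le.trans hA_le))

theorem cylinder_gap_bounds_general (θ : ℝ) (m : ℕ)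
    (hθ : θ ∈ Set.Ioo (0 : ℝ) 1) (hθ2 : θ ^ 2 = 1 / m)
    (n : ℕ) (hn : 1 ≤ n) (ℓ : ℕ → ℤ) (hℓ : ∀ i : ℕ, 1 ≤ i → i ≤ n → (m : ℤ) ≤ ℓ i)
    (d : ℤ) (hd : (m : ℤ) ≤ d) :
    Qden θ ℓ (n - 1) ≤ θ * Qden θ ℓ n ∧
    |cylEndpoint θ ℓ n (d + 1) - cylEndpoint θ ℓ n d| =
      θ / ((Qden θ ℓ n * (d : ℝ) * θ + Qden θ ℓ (n - 1)) *
        (Qden θ ℓ n * ((d : ℝ) + 1) * θ + Qden θ ℓ (n - 1))) ∧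
    1 / (θ * (Qden θ ℓ n) ^ 2 * ((d : ℝ) + 1) * ((d : ℝ) + 2)) ≤
      |cylEndpoint θ ℓ n (d + 1) - cylEndpoint θ ℓ n d| := by
  obtain ⟨k, rfl⟩ := Nat.exists_eq_add_of_le' hn
  simp only [Nat.add_sub_cancel]
  have hθ₀ : 0 < θ := hθ.1
  have hmθ : (m : ℝ) * θ ^ 2 = 1 := by
    have hm : (m : ℝ) ≠ 0 := by rintro hm; simp [hm, hθ₀.ne'] at hθ2
    rw [hθ2, mul_one_div_cancel hm]
  have hℓθ : ∀ i, 1 ≤ i → i ≤ k + 1 → 1 ≤ (ℓ i : ℝ) * θ ^ 2 := fun i h₁ h₂ =>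
    hmθ ▸ mul_le_mul_of_nonneg_right (by exact_mod_cast hℓ i h₁ h₂) (sq_nonneg θ)
  have hratio := Qden_le_mul_Qden_succ hθ₀ hℓθ
  have hQ₁ : 0 < Qden θ ℓ (k + 1) := Qden_pos_of_one_le_mul_sq hθ₀ hℓθ
  have hQ₀ : 0 < Qden θ ℓ k := Qden_pos_of_one_le_mul_sq hθ₀ fun i h₁ h₂ => hℓθ i h₁ (by omega)
  have hd₀ : (0 : ℝ) ≤ d := by exact_mod_cast (Int.natCast_nonneg m).trans hd
  have hA : 0 < Qden θ ℓ (k + 1) * d * θ + Qden θ ℓ k := by positivity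
  have hB : 0 < Qden θ ℓ (k + 1) * (d + 1) * θ + Qden θ ℓ k := by positivity
  have hgap : |cylEndpoint θ ℓ (k + 1) (d + 1) - cylEndpoint θ ℓ (k + 1) d| =
      θ / ((Qden θ ℓ (k + 1) * d * θ + Qden θ ℓ k) *
        (Qden θ ℓ (k + 1) * (d + 1) * θ + Qden θ ℓ k)) := by
    rw [cylEndpoint_add_one_sub k d hA.ne' hB.ne', abs_div, abs_mul, abs_neg_one_pow, one_mul,
      abs_of_pos hθ₀, abs_of_pos (mul_pos hA hB)]
  exact ⟨hratio, hgap, hgap ▸ one_div_le_div_mul_of_le_mul hθ₀ hQ₁.le hA hratio⟩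

/-- `Q_{n−1} ≤ θ·Q_n`; moreover the gap `Δ_d` between the adjacent
subcylinders for digits `d` and `d+1` equals
`θ/((Q_n·d·θ + Q_{n−1})·(Q_n·(d+1)·θ + Q_{n−1}))` and satisfies
`Δ_d ≥ 1/(θ·Q_n²·(d+1)·(d+2))`. -/
theorem cylinder_gap_bounds (θ : ℝ) (m : ℕ) (hm : 0 < m) (hmns : ¬ IsSquare m)
    (hθ : θ ∈ Set.Ioo (0 : ℝ) 1) (hθirr : Irrational θ) (hθ2 : θ ^ 2 = 1 / m)
    (n : ℕ) (hn : 1 ≤ n) (ℓ : ℕ → ℤ) (hℓ : ∀ i : ℕ, 1 ≤ i → i ≤ n → (m : ℤ) ≤ ℓ i)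
    (d : ℤ) (hd : (m : ℤ) ≤ d) :
    Qden θ ℓ (n - 1) ≤ θ * Qden θ ℓ n ∧
    |cylEndpoint θ ℓ n (d + 1) - cylEndpoint θ ℓ n d| =
      θ / ((Qden θ ℓ n * (d : ℝ) * θ + Qden θ ℓ (n - 1)) *
        (Qden θ ℓ n * ((d : ℝ) + 1) * θ + Qden θ ℓ (n - 1))) ∧
    1 / (θ * (Qden θ ℓ n) ^ 2 * ((d : ℝ) + 1) * ((d : ℝ) + 2)) ≤
      |cylEndpoint θ ℓ n (d + 1) - cylEndpoint θ ℓ n d| :=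
  cylinder_gap_bounds_general θ m hθ hθ2 n hn ℓ hℓ d hd
end
end
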